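/- arXiv:2504.05930 — 8 statements merged into one kernel-verified Lean document; each statement's English description precedes it below -/
import Mathlib

section
/- A set {r,s} of two linearly independent 0,±1 vectors forms a totally equimodular matrix which is not totally unimodular if and only if supp(r) = supp(s) and r ≠ ±s. -/
/-- All the nonzero maximal (m×m) subdeterminants of `A` have the same absolute value. -/
def Equimodular {m n : ℕ} (A : Matrix (Fin m) (Fin n) ℚ) : Prop :=
  ∃ d : ℚ, ∀ g : Fin m ↪ Fin n,
    (A.submatrix id g).det ≠ 0 → |(A.submatrix id g).det| = d

/-- Every set of linearly independent rows of `A` forms an equimodular matrix. -/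
def TotallyEquimodular {m n : ℕ} (A : Matrix (Fin m) (Fin n) ℚ) : Prop :=
  ∀ (k : ℕ) (e : Fin k ↪ Fin m),
    LinearIndependent ℚ (fun i => A (e i)) → Equimodular (A.submatrix e id)

private lemma fin2cases (i : Fin 2) : i = 0 ∨ i = 1 := by omega

private lemma mem_signRange {x : ℚ} (h : x = 0 ∨ x = 1 ∨ x = -1) :
    x ∈ Set.range (SignType.cast : SignType → ℚ) := by
  rcases h with h | h | h
  · exact ⟨0, by simp [h]⟩
  · exact ⟨1, by simp [h]⟩
  · exact ⟨-1, by simp [h]⟩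

private lemma key2 {rj rk sj sk : ℚ}
    (h1 : rj = 0 ∨ rj = 1 ∨ rj = -1) (h2 : rk = 0 ∨ rk = 1 ∨ rk = -1)
    (h3 : sj = 0 ∨ sj = 1 ∨ sj = -1) (h4 : sk = 0 ∨ sk = 1 ∨ sk = -1)
    (e1 : rj = 0 ↔ sj = 0) (e2 : rk = 0 ↔ sk = 0)
    (hne : rj * sk - rk * sj ≠ 0) : |rj * sk - rk * sj| = 2 := by
  rcases h1 with h|h|h <;> rcases h2 with h'|h'|h' <;> rcases h3 with h''|h''|h'' <;>
    rcases h4 with h'''|h'''|h''' <;> subst_vars <;>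
      first
        | (norm_num; done)
        | (norm_num at e1; done)
        | (norm_num at e2; done)
        | (norm_num at hne; done)

private lemma key3 {rj rk sj sk : ℚ}
    (h1 : rj = 0 ∨ rj = 1 ∨ rj = -1) (h2 : rk = 0 ∨ rk = 1 ∨ rk = -1)
    (h3 : sj = 0 ∨ sj = 1 ∨ sj = -1) (h4 : sk = 0 ∨ sk = 1 ∨ sk = -1)
    (h : |rj * sk - rk * sj| = 2) : rj ≠ 0 ∧ rk ≠ 0 ∧ sj ≠ 0 ∧ sk ≠ 0 := by
  rcases h1 with h1|h1|h1 <;> rcases h2 with h2|h2|h2 <;> rcases h3 with h3|h3|h3 <;>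
    rcases h4 with h4|h4|h4 <;> subst_vars <;> first | (norm_num at h; done) | norm_num

private lemma key4 {a b c d : ℚ}
    (h1 : a = 0 ∨ a = 1 ∨ a = -1) (h2 : b = 0 ∨ b = 1 ∨ b = -1)
    (h3 : c = 0 ∨ c = 1 ∨ c = -1) (h4 : d = 0 ∨ d = 1 ∨ d = -1)
    (h : a * d - b * c ∉ Set.range (SignType.cast : SignType → ℚ)) :
    |a * d - b * c| = 2 := by
  rcases h1 with h1|h1|h1 <;> rcases h2 with h2|h2|h2 <;> rcases h3 with h3|h3|h3 <;>
    rcases h4 with h4|h4|h4 <;> subst_vars <;>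
    first
      | (norm_num; done)
      | (exact absurd (mem_signRange (by norm_num)) h)

private def emb2 {n : ℕ} (j k : Fin n) (h : j ≠ k) : Fin 2 ↪ Fin n :=
  ⟨![j, k], by
    intro a b hab
    rcases fin2cases a with ha | ha <;> rcases fin2cases b with hb | hb <;> subst_vars <;>
      simp_all⟩

theorem stmt0 {n : ℕ} (r s : Fin n → ℚ)
    (hr : ∀ j, r j = 0 ∨ r j = 1 ∨ r j = -1)
    (hs : ∀ j, s j = 0 ∨ s j = 1 ∨ s j = -1)
    (hli : LinearIndependent ℚ ![r, s]) :
    (TotallyEquimodular (Matrix.of ![r, s]) ∧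
        ¬ (Matrix.of ![r, s]).IsTotallyUnimodular) ↔
      ({j | r j ≠ 0} = {j | s j ≠ 0} ∧ r ≠ s ∧ r ≠ -s) := by

  set A := Matrix.of ![r, s] with hAdef
  have hA0 : ∀ j, A 0 j = r j := fun j => rfl
  have hA1 : ∀ j, A 1 j = s j := fun j => rfl
  have hent : ∀ (i : Fin 2) j, A i j = 0 ∨ A i j = 1 ∨ A i j = -1 := by
    intro i j
    rcases fin2cases i with h | h <;> subst h
    · exact hr j
    · exact hs j
  -- r ≠ s and r ≠ -s from linear independence
  have hli' := Fintype.linearIndependent_iff.mp hli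
  have hrs1 : r ≠ s := by
    intro h
    have h0 := hli' ![1, -1] ?_ 0
    · norm_num at h0
    · funext l
      simp [Fin.sum_univ_two, h]
  have hrs2 : r ≠ -s := by
    intro h
    have h0 := hli' ![1, 1] ?_ 0
    · norm_num at h0
    · funext l
      simp [Fin.sum_univ_two, h]
  -- |det of any 2x2 submatrix with injective row selection| = |D j k|
  have habs : ∀ (f : Fin 2 → Fin 2), Function.Injective f → ∀ j k : Fin n,
      |A (f 0) j * A (f 1) k - A (f 0) k * A (f 1) j| = |r j * s k - r k * s j| := by
    intro f hf j k
    rcases fin2cases (f 0) with h0 | h0 <;> rcases fin2cases (f 1) with h1 | h1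
    · exact absurd (hf (h0.trans h1.symm)) (by decide)
    · rw [h0, h1, hA0, hA0, hA1, hA1]
    · rw [h0, h1, hA0, hA0, hA1, hA1,
        show s j * r k - s k * r j = -(r j * s k - r k * s j) by ring, abs_neg]
    · exact absurd (hf (h0.trans h1.symm)) (by decide)
  constructor
  · rintro ⟨hte, htu⟩
    refine ⟨?_, hrs1, hrs2⟩
    simp only [Matrix.IsTotallyUnimodular] at htu
    push_neg at htu
    obtain ⟨k, f, g, hf, hg, hdet⟩ := htu
    have hk2 : k ≤ 2 := by simpa using Fintype.card_le_of_injective f hf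
    interval_cases k
    · exact absurd (by rw [Matrix.det_fin_zero]; exact mem_signRange (by norm_num)) hdet
    · exact absurd (by rw [Matrix.det_fin_one]; exact mem_signRange (hent _ _)) hdet
    · -- extract columns with |D| = 2
      have hdeteq : (A.submatrix f g).det =
          A (f 0) (g 0) * A (f 1) (g 1) - A (f 0) (g 1) * A (f 1) (g 0) := by
        simp [Matrix.det_fin_two, Matrix.submatrix_apply]
      rw [hdeteq] at hdet
      have hD2 : |r (g 0) * s (g 1) - r (g 1) * s (g 0)| = 2 := by
        rw [← habs f hf]
        exact key4 (hent _ _) (hent _ _) (hent _ _) (hent _ _) hdet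
      obtain ⟨hr0, hr1, hs0, hs1⟩ := key3 (hr _) (hr _) (hs _) (hs _) hD2
      -- equimodularity of the full matrix
      have hliA : LinearIndependent ℚ (fun i => A ((Function.Embedding.refl (Fin 2)) i)) := hli
      obtain ⟨d, hd⟩ := hte 2 (Function.Embedding.refl (Fin 2)) hliA
      have hd' : ∀ (j k : Fin n), j ≠ k → r j * s k - r k * s j ≠ 0 →
          |r j * s k - r k * s j| = d := by
        intro j k hjk hne
        have hdeq : ((A.submatrix (Function.Embedding.refl (Fin 2)) id).submatrix id
            (emb2 j k hjk)).det = r j * s k - r k * s j := by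
          simp [Matrix.det_fin_two, Matrix.submatrix_apply, emb2, hA0, hA1]
          rfl
        have := hd (emb2 j k hjk)
        rw [hdeq] at this
        exact this hne
      have hg01 : g 0 ≠ g 1 := fun h => absurd (hg h) (by decide)
      have hDne : r (g 0) * s (g 1) - r (g 1) * s (g 0) ≠ 0 := by
        intro h0; rw [h0] at hD2; norm_num at hD2
      have hd2 : d = 2 := by rw [← hd' _ _ hg01 hDne, hD2]
      -- prove supports equal
      ext l
      simp only [Set.mem_setOf_eq]
      constructor
      · intro hrl
        by_contra hsl
        have hlg : l ≠ g 0 := fun h => hs0 (h ▸ hsl)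
        have hDval : r l * s (g 0) - r (g 0) * s l = r l * s (g 0) := by rw [hsl]; ring
        have hone : |r l * s (g 0) - r (g 0) * s l| = 1 := by
          rw [hDval, abs_mul]
          rcases hr l with h|h|h <;> rcases hs (g 0) with h'|h'|h' <;>
            first | (exact absurd h hrl) | (exact absurd h' hs0) | (rw [h, h']; norm_num)
        have hne : r l * s (g 0) - r (g 0) * s l ≠ 0 := by
          intro h0; rw [h0] at hone; norm_num at hone
        have := hd' l (g 0) hlg hne
        rw [hone, hd2] at this
        norm_num at this
      · intro hsl
        by_contra hrl
        have hlg : l ≠ g 0 := fun h => hr0 (h ▸ hrl)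
        have hDval : r l * s (g 0) - r (g 0) * s l = -(r (g 0) * s l) := by rw [hrl]; ring
        have hone : |r l * s (g 0) - r (g 0) * s l| = 1 := by
          rw [hDval, abs_neg, abs_mul]
          rcases hr (g 0) with h|h|h <;> rcases hs l with h'|h'|h' <;>
            first | (exact absurd h hr0) | (exact absurd h' hsl) | (rw [h, h']; norm_num)
        have hne : r l * s (g 0) - r (g 0) * s l ≠ 0 := by
          intro h0; rw [h0] at hone; norm_num at hone
        have := hd' l (g 0) hlg hne
        rw [hone, hd2] at this
        norm_num at this
  · rintro ⟨hsupp, -, -⟩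
    have hsupp' : ∀ j, r j = 0 ↔ s j = 0 := by
      intro j
      have := Set.ext_iff.mp hsupp j
      simp only [Set.mem_setOf_eq] at this
      rw [← not_iff_not]
      exact this
    constructor
    · intro k e li
      have hk2 : k ≤ 2 := by simpa using Fintype.card_le_of_injective e e.injective
      interval_cases k
      · exact ⟨1, fun g h => by rw [Matrix.det_fin_zero]; norm_num⟩
      · refine ⟨1, fun g h => ?_⟩
        rw [Matrix.det_fin_one] at h ⊢
        simp only [Matrix.submatrix_apply, id] at h ⊢
        rcases hent (e 0) (g 0) with h'|h'|h' <;> rw [h'] <;> first | (exact absurd h' h) | norm_num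
      · refine ⟨2, fun g h => ?_⟩
        have hdeteq : ((A.submatrix e id).submatrix id g).det =
            A (e 0) (g 0) * A (e 1) (g 1) - A (e 0) (g 1) * A (e 1) (g 0) := by
          simp [Matrix.det_fin_two, Matrix.submatrix_apply]
        rw [hdeteq] at h ⊢
        rw [habs e e.injective]
        have hDne : r (g 0) * s (g 1) - r (g 1) * s (g 0) ≠ 0 := by
          intro h0
          apply h
          have h1 := habs e e.injective (g 0) (g 1)
          rw [h0] at h1
          simpa [abs_eq_zero] using h1
        exact key2 (hr _) (hr _) (hs _) (hs _) (hsupp' _) (hsupp' _) hDne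
    · intro htu
      have hr0 : r ≠ 0 := hli.ne_zero 0
      obtain ⟨j, hj⟩ := Function.ne_iff.mp hr0
      simp only [Pi.zero_apply] at hj
      have hsj : s j ≠ 0 := fun h => hj ((hsupp' j).mpr h)
      obtain ⟨k, hk⟩ : ∃ k, r j * s k - r k * s j ≠ 0 := by
        by_contra hc
        push_neg at hc
        have hsum : ∑ i : Fin 2, (![-(s j), r j]) i • (![r, s]) i = 0 := by
          funext l
          simp only [Fin.sum_univ_two, Matrix.cons_val_zero, Matrix.cons_val_one,
            Matrix.head_cons, Pi.add_apply, Pi.smul_apply, smul_eq_mul, Pi.zero_apply]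
          have := hc l
          linarith
        have := hli' ![-(s j), r j] hsum 1
        simp only [Matrix.cons_val_one, Matrix.head_cons] at this
        exact hj this
      have hjk : j ≠ k := by
        intro h
        apply hk
        rw [← h]
        ring
      have habs2 : |r j * s k - r k * s j| = 2 :=
        key2 (hr j) (hr k) (hs j) (hs k) (hsupp' j) (hsupp' k) hk
      have hmem := htu 2 id ![j, k] Function.injective_id (emb2 j k hjk).injective
      have hdeq : (A.submatrix id ![j, k]).det = r j * s k - r k * s j := by
        simp [Matrix.det_fin_two, Matrix.submatrix_apply, hA0, hA1]
      rw [hdeq] at hmem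
      obtain ⟨t, ht⟩ := hmem
      cases t <;> rw [← ht] at habs2 <;> norm_num at habs2
end

section
/- Let A be a full row rank m×n rational matrix and let (i,j) be a pivot position (i.e., A_i^j ≠ 0). Then A is equimodular if and only if the matrix A/(i,j) obtained by Gaussian pivoting at (i,j) is equimodular. (Pivoting at (i,j) means dividing row i by A_i^j and then adding multiples of this row to the other rows so that column j becomes the i-th standard unit vector.) -/
/-- Gaussian pivot of `A` at position `(i, j)`. -/
def pivotAt {m n : ℕ} (A : Matrix (Fin m) (Fin n) ℚ) (i : Fin m) (j : Fin n) :
    Matrix (Fin m) (Fin n) ℚ :=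
  Matrix.of fun r c => if r = i then A i c / A i j else A r c - A r j / A i j * A i c

/-- Trim of `A` at `(i, j)`: pivot at `(i, j)`, then delete row `i` and column `j`. -/
def trimAt {m n : ℕ} (A : Matrix (Fin (m + 1)) (Fin (n + 1)) ℚ)
    (i : Fin (m + 1)) (j : Fin (n + 1)) : Matrix (Fin m) (Fin n) ℚ :=
  (pivotAt A i j).submatrix i.succAbove j.succAbove

theorem stmt2 {m n : ℕ} (A : Matrix (Fin m) (Fin n) ℚ)
    (hA : LinearIndependent ℚ (fun i => A i)) (i : Fin m) (j : Fin n)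
    (hij : A i j ≠ 0) :
    Equimodular A ↔ Equimodular (pivotAt A i j) := by
  set E : Matrix (Fin m) (Fin m) ℚ := fun r k =>
    if r = i then (if k = i then 1 / A i j else 0)
    else (if k = r then 1 else if k = i then -(A r j) / A i j else 0) with hE
  set F : Matrix (Fin m) (Fin m) ℚ := fun r k =>
    if r = i then (if k = i then A i j else 0)
    else (if k = r then 1 else if k = i then A r j else 0) with hF
  have hEF : E * F = 1 := by
    ext r c
    rcases eq_or_ne r i with rfl | hr
    · rw [Matrix.mul_apply, Finset.sum_eq_single r (fun k _ hk => by simp [hE, hk]) (by simp)]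
      simp only [hE, hF, if_pos rfl]
      rcases eq_or_ne c r with rfl | hc
      · simp [hij, Matrix.one_apply]
      · simp [Ne.symm hc, hc, Matrix.one_apply]
    · have : ∀ k, E r k * F k c =
          (if k = r then F r c else 0) + (if k = i then -(A r j) / A i j * F i c else 0) := by
        intro k
        simp only [hE, hF, if_neg hr]
        rcases eq_or_ne k r with rfl | hkr
        · simp [hr]
        · rcases eq_or_ne k i with rfl | hki
          · simp [hkr, hr]
          · simp [hkr, hki]
      rw [Matrix.mul_apply, Finset.sum_congr rfl (fun k _ => this k), Finset.sum_add_distrib]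
      simp only [Finset.sum_ite_eq', Finset.mem_univ, if_true, hF, if_pos rfl, if_neg hr]
      rcases eq_or_ne c i with rfl | hc
      · simp [Ne.symm hr, Matrix.one_apply, hr, hij, div_mul_cancel₀]
      · rcases eq_or_ne c r with rfl | hcr
        · simp [hc, Matrix.one_apply]
        · simp [hc, Ne.symm hcr, Matrix.one_apply, Ne.symm hcr]
          exact hcr
  have hdetE : E.det ≠ 0 := by
    intro h
    have := congrArg Matrix.det hEF
    rw [Matrix.det_mul, h, zero_mul, Matrix.det_one] at this
    exact zero_ne_one this
  have hPA : pivotAt A i j = E * A := by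
    ext r c
    rcases eq_or_ne r i with rfl | hr
    · rw [Matrix.mul_apply, Finset.sum_eq_single r (fun k _ hk => by simp [hE, hk]) (by simp)]
      simp [pivotAt, hE, div_mul_eq_mul_div, one_mul, mul_comm]
      ring
    · have : ∀ k, E r k * A k c =
          (if k = r then A r c else 0) + (if k = i then -(A r j) / A i j * A i c else 0) := by
        intro k
        simp only [hE, if_neg hr]
        rcases eq_or_ne k r with rfl | hkr
        · simp [hr]
        · rcases eq_or_ne k i with rfl | hki
          · simp [hkr]
          · simp [hkr, hki]
      rw [Matrix.mul_apply, Finset.sum_congr rfl (fun k _ => this k), Finset.sum_add_distrib]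
      simp [Finset.sum_ite_eq', pivotAt, if_neg hr]
      ring
  have key : ∀ g : Fin m ↪ Fin n,
      ((pivotAt A i j).submatrix id g).det = E.det * (A.submatrix id g).det := by
    intro g
    have h2 : (E * A).submatrix id g = E * (A.submatrix id g) := by
      ext r c
      simp [Matrix.mul_apply, Matrix.submatrix]
    rw [hPA, h2, Matrix.det_mul]
  constructor
  · rintro ⟨d, hd⟩
    refine ⟨|E.det| * d, fun g hg => ?_⟩
    rw [key g] at hg ⊢
    have hAg : (A.submatrix id g).det ≠ 0 := fun h => hg (by rw [h, mul_zero])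
    rw [abs_mul, hd g hAg]
  · rintro ⟨d, hd⟩
    refine ⟨d / |E.det|, fun g hg => ?_⟩
    have := hd g (by rw [key g]; exact mul_ne_zero hdetE hg)
    rw [key g, abs_mul] at this
    rw [eq_div_iff (abs_ne_zero.mpr hdetE), mul_comm, ← this]
end

section
/- Let A be a full row rank m×n rational matrix whose i-th row r has all entries in {0,±1}. Then A is equimodular if and only if for every j in the support of r, the matrix A//(i,j) obtained from A by pivoting at (i,j) and then deleting row i and column j is equimodular. -/
/-! Pivoting at `(i, j)` and expanding along column `j` shows that a maximal minor of `A` through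
column `j` is `±A i j` times a maximal minor of the trim at `(i, j)`, and every nonzero maximal
minor uses a column from the support of row `i`. Hence trims of an equimodular matrix are
equimodular, and conversely, if the trims are, two bases sharing a support column have the same
`|det|`. Two arbitrary bases are linked by one exchange step from Cramer's rule: either the new
basis shares a support column with each of them, or the exchanged columns are parallel with ratio
`±1`, since row `i` has entries in `{0, ±1}`. -/

open Matrix

variable {m n : ℕ}

lemma det_pivotAt (M : Matrix (Fin m) (Fin m) ℚ) (i k : Fin m) :
    (pivotAt M i k).det = M.det / M i k := by
  set c : Fin m → ℚ := fun r => if r = i then 0 else -(M r k / M i k)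
  -- `M'` is the pivot except that row `i` is not rescaled yet
  set M' : Matrix (Fin m) (Fin m) ℚ := fun r s => M r s + c r * M i s
  have hM' : M'.det = M.det :=
    det_eq_of_forall_row_eq_smul_add_const c i (if_pos rfl) fun _ _ => rfl
  have hpivot : pivotAt M i k = M'.updateRow i ((M i k)⁻¹ • M' i) := by
    ext r s
    by_cases hr : r = i
    · subst hr
      rw [updateRow_self]
      simp [pivotAt, M', c, div_eq_inv_mul]
    · rw [updateRow_ne hr]
      simp only [pivotAt, of_apply, hr, ↓reduceIte, neg_mul, M', c]
      ring
  rw [hpivot, det_updateRow_smul, updateRow_eq_self, hM', div_eq_inv_mul]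

lemma abs_det_eq_abs_det_submatrix_of_col_eq_single (P : Matrix (Fin (m + 1)) (Fin (m + 1)) ℚ)
    {i k : Fin (m + 1)} (hcol : ∀ r, P r k = (Pi.single i 1 : Fin (m + 1) → ℚ) r) :
    |P.det| = |(P.submatrix i.succAbove k.succAbove).det| := by
  rw [det_succ_column P k, Finset.sum_eq_single i]
  · simp [hcol, abs_mul]
  · intro r _ hr
    simp [hcol, hr]
  · simp

lemma abs_det_eq_mul_abs_det_trimAt (M : Matrix (Fin (m + 1)) (Fin (m + 1)) ℚ)
    {i k : Fin (m + 1)} (hik : M i k ≠ 0) :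
    |M.det| = |M i k| * |(trimAt M i k).det| := by
  have hcol : ∀ r, pivotAt M i k r k = (Pi.single i 1 : Fin (m + 1) → ℚ) r := by
    intro r
    by_cases hr : r = i
    · subst hr
      simp [pivotAt, hik]
    · simp [pivotAt, hr, hik]
  rw [trimAt, ← abs_det_eq_abs_det_submatrix_of_col_eq_single _ hcol, det_pivotAt, abs_div,
    mul_div_cancel₀ _ (abs_ne_zero.mpr hik)]

/-- Cramer's rule `M *ᵥ cramer M v = det M • v`, read off when all Cramer coefficients but the
`k₁`-th vanish. -/
lemma exists_det_updateCol_ne_zero_or_smul_col (M : Matrix (Fin m) (Fin m) ℚ)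
    (v : Fin m → ℚ) (k₁ : Fin m) :
    (∃ k ≠ k₁, (M.updateCol k v).det ≠ 0) ∨
      ∀ r, M.det * v r = (M.updateCol k₁ v).det * M r k₁ := by
  refine or_iff_not_imp_left.mpr fun h r => ?_
  push Not at h
  have hr := congrFun (mulVec_cramer M v) r
  rw [mulVec, dotProduct, Finset.sum_eq_single k₁ (fun k _ hk => by rw [cramer_apply, h k hk,
    mul_zero]) (by simp)] at hr
  rw [← smul_eq_mul, ← Pi.smul_apply, ← hr, cramer_apply, mul_comm]

lemma injective_of_det_submatrix_ne_zero {A : Matrix (Fin m) (Fin n) ℚ} {f : Fin m → Fin n}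
    (hf : (A.submatrix id f).det ≠ 0) : Function.Injective f := by
  intro a b hab
  by_contra hne
  exact hf (det_zero_of_column_eq hne fun r => by simp [hab])

lemma equimodular_iff_abs_det_eq (A : Matrix (Fin m) (Fin n) ℚ) :
    Equimodular A ↔ ∀ f g : Fin m → Fin n, (A.submatrix id f).det ≠ 0 →
      (A.submatrix id g).det ≠ 0 → |(A.submatrix id f).det| = |(A.submatrix id g).det| := by
  constructor
  · rintro ⟨d, hd⟩ f g hf hg
    exact (hd ⟨f, injective_of_det_submatrix_ne_zero hf⟩ hf).trans
      (hd ⟨g, injective_of_det_submatrix_ne_zero hg⟩ hg).symm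
  · intro H
    by_cases hex : ∃ g : Fin m ↪ Fin n, (A.submatrix id g).det ≠ 0
    · obtain ⟨g, hg⟩ := hex
      exact ⟨_, fun f hf => H f g hf hg⟩
    · push Not at hex
      exact ⟨0, fun g hg => absurd (hex g) hg⟩

/-- `f'` lists, in the column indices of the trim, the columns of the minor other than `j`. -/
lemma abs_det_submatrix_eq_mul_abs_det_trimAt (A : Matrix (Fin (m + 1)) (Fin (n + 1)) ℚ)
    {i : Fin (m + 1)} {j : Fin (n + 1)} (hij : A i j ≠ 0) {f : Fin (m + 1) → Fin (n + 1)}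
    {f' : Fin m → Fin n} {k : Fin (m + 1)} (hk : f k = j)
    (hf' : ∀ l, f (k.succAbove l) = j.succAbove (f' l)) :
    |(A.submatrix id f).det| = |A i j| * |((trimAt A i j).submatrix id f').det| := by
  have htrim : trimAt (A.submatrix id f) i k = (trimAt A i j).submatrix id f' := by
    ext r s
    simp [trimAt, pivotAt, hk, hf']
  rw [abs_det_eq_mul_abs_det_trimAt _ (show A i (f k) ≠ 0 by rwa [hk]), htrim]
  simp [hk]

lemma exists_succAbove_eq_comp {f : Fin (m + 1) → Fin (n + 1)} (hf : Function.Injective f)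
    {k : Fin (m + 1)} {j : Fin (n + 1)} (hk : f k = j) :
    ∃ f' : Fin m → Fin n, ∀ l, f (k.succAbove l) = j.succAbove (f' l) := by
  have hne : ∀ l, f (k.succAbove l) ≠ j := fun l h =>
    Fin.succAbove_ne k l (hf (h.trans hk.symm))
  choose f' hf' using fun l => Fin.exists_succAbove_eq (hne l)
  exact ⟨f', fun l => (hf' l).symm⟩

lemma Equimodular.trimAt_of_ne_zero {A : Matrix (Fin (m + 1)) (Fin (n + 1)) ℚ} (hA : Equimodular A)
    {i : Fin (m + 1)} {j : Fin (n + 1)} (hij : A i j ≠ 0) : Equimodular (trimAt A i j) := by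
  rw [equimodular_iff_abs_det_eq] at hA ⊢
  intro f' g' hf' hg'
  have hcons (h' : Fin m → Fin n) :
      |(A.submatrix id (Fin.cons j (j.succAbove ∘ h'))).det| =
        |A i j| * |((trimAt A i j).submatrix id h').det| :=
    abs_det_submatrix_eq_mul_abs_det_trimAt A hij (k := 0) rfl fun _ => rfl
  have hne (h' : Fin m → Fin n) (hh' : ((trimAt A i j).submatrix id h').det ≠ 0) :
      (A.submatrix id (Fin.cons j (j.succAbove ∘ h'))).det ≠ 0 := by
    rw [← abs_ne_zero, hcons]
    positivity
  have := hA _ _ (hne f' hf') (hne g' hg')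
  rwa [hcons, hcons, mul_right_inj' (abs_ne_zero.mpr hij)] at this

lemma abs_det_submatrix_eq_of_mem_range {A : Matrix (Fin (m + 1)) (Fin (n + 1)) ℚ}
    {i : Fin (m + 1)} {j : Fin (n + 1)} (hij : A i j ≠ 0) (hT : Equimodular (trimAt A i j))
    {f g : Fin (m + 1) → Fin (n + 1)} (hjf : j ∈ Set.range f) (hjg : j ∈ Set.range g)
    (hf : (A.submatrix id f).det ≠ 0) (hg : (A.submatrix id g).det ≠ 0) :
    |(A.submatrix id f).det| = |(A.submatrix id g).det| := by
  obtain ⟨kf, hkf⟩ := hjf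
  obtain ⟨kg, hkg⟩ := hjg
  obtain ⟨f', hf'⟩ := exists_succAbove_eq_comp (injective_of_det_submatrix_ne_zero hf) hkf
  obtain ⟨g', hg'⟩ := exists_succAbove_eq_comp (injective_of_det_submatrix_ne_zero hg) hkg
  have hdf := abs_det_submatrix_eq_mul_abs_det_trimAt A hij hkf hf'
  have hdg := abs_det_submatrix_eq_mul_abs_det_trimAt A hij hkg hg'
  have hf'0 : ((trimAt A i j).submatrix id f').det ≠ 0 := fun h0 =>
    hf (abs_eq_zero.mp (by rw [hdf, h0, abs_zero, mul_zero]))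
  have hg'0 : ((trimAt A i j).submatrix id g').det ≠ 0 := fun h0 =>
    hg (abs_eq_zero.mp (by rw [hdg, h0, abs_zero, mul_zero]))
  rw [hdf, hdg, (equimodular_iff_abs_det_eq _).mp hT f' g' hf'0 hg'0]

lemma equimodular_of_forall_trimAt {A : Matrix (Fin (m + 1)) (Fin (n + 1)) ℚ} {i : Fin (m + 1)}
    (hrow : ∀ c c', A i c ≠ 0 → A i c' ≠ 0 → |A i c| = |A i c'|)
    (H : ∀ j, A i j ≠ 0 → Equimodular (trimAt A i j)) : Equimodular A := by
  have hsupp {f : Fin (m + 1) → Fin (n + 1)} (hf : (A.submatrix id f).det ≠ 0) :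
      ∃ k, A i (f k) ≠ 0 := by
    by_contra! h
    exact hf (det_eq_zero_of_row_eq_zero i h)
  rw [equimodular_iff_abs_det_eq]
  intro f g hf hg
  obtain ⟨k₁, hk₁⟩ := hsupp hf
  obtain ⟨k₂, hk₂⟩ := hsupp hg
  set j₂ := g k₂
  have hupd (k) : (A.submatrix id f).updateCol k (fun r => A r j₂) =
      A.submatrix id (Function.update f k j₂) := by
    ext r c
    by_cases hc : c = k <;> simp [hc]
  suffices ∃ k, (A.submatrix id (Function.update f k j₂)).det ≠ 0 ∧
      |(A.submatrix id f).det| = |(A.submatrix id (Function.update f k j₂)).det| by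
    obtain ⟨k, hk, heq⟩ := this
    exact heq.trans (abs_det_submatrix_eq_of_mem_range hk₂ (H _ hk₂)
      ⟨k, Function.update_self k j₂ f⟩ ⟨k₂, rfl⟩ hk hg)
  rcases exists_det_updateCol_ne_zero_or_smul_col (A.submatrix id f) (fun r => A r j₂) k₁ with
    ⟨k, hk, hdet⟩ | hpar
  · rw [hupd] at hdet
    refine ⟨k, hdet, abs_det_submatrix_eq_of_mem_range hk₁ (H _ hk₁) ⟨k₁, rfl⟩
      ⟨k₁, Function.update_of_ne hk.symm j₂ f⟩ hf hdet⟩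
  · -- column `j₂` is parallel to column `f k₁`, and row `i` forces the ratio to be `±1`
    have hi := hpar i
    simp only [hupd, submatrix_apply, id] at hi
    have habs := congrArg abs hi
    rw [abs_mul, abs_mul, hrow _ _ hk₂ hk₁, mul_left_inj' (abs_ne_zero.mpr hk₁)] at habs
    refine ⟨k₁, fun h0 => hf ?_, habs⟩
    rwa [h0, abs_zero, abs_eq_zero] at habs

theorem stmt3_general {m n : ℕ} (A : Matrix (Fin (m + 1)) (Fin (n + 1)) ℚ)
    (i : Fin (m + 1))
    (hrow : ∀ c, A i c = 0 ∨ A i c = 1 ∨ A i c = -1) :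
    Equimodular A ↔ ∀ j : Fin (n + 1), A i j ≠ 0 → Equimodular (trimAt A i j) := by
  have habs (c) (hc : A i c ≠ 0) : |A i c| = 1 := by
    rcases hrow c with h | h | h <;> simp_all
  exact ⟨fun hA _ hij => hA.trimAt_of_ne_zero hij,
    equimodular_of_forall_trimAt fun c c' hc hc' => (habs c hc).trans (habs c' hc').symm⟩

theorem stmt3 {m n : ℕ} (A : Matrix (Fin (m + 1)) (Fin (n + 1)) ℚ)
    (hA : LinearIndependent ℚ (fun r => A r)) (i : Fin (m + 1))
    (hrow : ∀ c, A i c = 0 ∨ A i c = 1 ∨ A i c = -1) :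
    Equimodular A ↔ ∀ j : Fin (n + 1), A i j ≠ 0 → Equimodular (trimAt A i j) :=
  stmt3_general A i hrow
end

section
/- A matrix is totally equimodular if and only if every matrix obtained from it by any finite sequence of pivots and trims is totally equimodular. -/
/-- `PTSeq A B` : `B` is obtained from `A` by a finite sequence of pivots and trims. -/
inductive PTSeq : (Σ m n : ℕ, Matrix (Fin m) (Fin n) ℚ) →
    (Σ m n : ℕ, Matrix (Fin m) (Fin n) ℚ) → Prop
  | refl (A : Σ m n : ℕ, Matrix (Fin m) (Fin n) ℚ) : PTSeq A A
  | pivot {m n : ℕ} {B : Σ m n : ℕ, Matrix (Fin m) (Fin n) ℚ}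
      (A : Matrix (Fin m) (Fin n) ℚ) (i : Fin m) (j : Fin n) (h : A i j ≠ 0)
      (hrec : PTSeq ⟨m, n, pivotAt A i j⟩ B) : PTSeq ⟨m, n, A⟩ B
  | trim {m n : ℕ} {B : Σ m n : ℕ, Matrix (Fin m) (Fin n) ℚ}
      (A : Matrix (Fin (m + 1)) (Fin (n + 1)) ℚ) (i : Fin (m + 1)) (j : Fin (n + 1))
      (h : A i j ≠ 0) (hrec : PTSeq ⟨m, n, trimAt A i j⟩ B) : PTSeq ⟨m + 1, n + 1, A⟩ B

/-!
On a set of rows containing row `i`, a pivot at `(i, j)` is an invertible row operation: it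
multiplies every maximal minor by `(A i j)⁻¹` and does not enlarge the row space, so linearly
independent rows of the pivoted matrix come from linearly independent rows of `A`, and their minors
are rescaled by a common factor. Rows of the pivoted matrix avoiding row `i` vanish in column `j`,
so adjoining row `i` and column `j` (where the entry is `1`) keeps them independent and leaves
their minors unchanged, which reduces to the first case. A trim is a pivot followed by taking a
submatrix, and total equimodularity passes to submatrices.
-/

open Function Set Submodule

theorem LinearIndependent.of_span_le {K V ι : Type*} [DivisionRing K] [AddCommGroup V]
    [Module K V] [Fintype ι] {v w : ι → V} (hv : LinearIndependent K v)
    (h : span K (range v) ≤ span K (range w)) : LinearIndependent K w := by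
  have := Module.Finite.span_of_finite K (finite_range w)
  rw [linearIndependent_iff_card_le_finrank_span]
  calc Fintype.card ι = (range v).finrank K := linearIndependent_iff_card_eq_finrank_span.mp hv
    _ ≤ (range w).finrank K := Submodule.finrank_mono h

theorem linearIndependent_finCons_of_apply_eq_zero {K κ : Type*} [DivisionRing K] {k : ℕ}
    {v : Fin k → κ → K} {w : κ → K} (j : κ) (hv : LinearIndependent K v)
    (hvj : ∀ a, v a j = 0) (hwj : w j ≠ 0) : LinearIndependent K (Fin.cons w v) := by
  refine linearIndependent_finCons.mpr ⟨hv, fun hw => hwj ?_⟩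
  have hker : span K (range v) ≤ LinearMap.ker (LinearMap.proj j) :=
    span_le.mpr (range_subset_iff.mpr hvj)
  exact hker hw

theorem Matrix.det_submatrix_finCons {R α β : Type*} [CommRing R] {k : ℕ} (M : Matrix α β R)
    (e : Fin k → α) (g : Fin k → β) {i : α} {j : β} (hij : M i j = 1)
    (hj : ∀ a, M (e a) j = 0) :
    (M.submatrix (Fin.cons i e) (Fin.cons j g)).det = (M.submatrix e g).det := by
  rw [det_succ_column_zero, Fin.sum_univ_succ]
  simp [hij, hj]

theorem equimodular_submatrix_iff {m n k : ℕ} (A : Matrix (Fin m) (Fin n) ℚ)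
    (e : Fin k → Fin m) :
    Equimodular (A.submatrix e id) ↔
      ∃ d, ∀ g : Fin k ↪ Fin n, (A.submatrix e g).det ≠ 0 → |(A.submatrix e g).det| = d :=
  Iff.rfl

section Pivot

variable {m n : ℕ} (A : Matrix (Fin m) (Fin n) ℚ) (i : Fin m) (j : Fin n)

theorem pivotAt_row_self : pivotAt A i j i = (A i j)⁻¹ • A i := by
  ext c
  simp [pivotAt, div_eq_inv_mul]

theorem pivotAt_row_of_ne {r : Fin m} (hr : r ≠ i) :
    pivotAt A i j r = A r - (A r j / A i j) • A i := by
  ext c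
  simp [pivotAt, hr]

variable {A i j}

theorem pivotAt_apply_self (hA : A i j ≠ 0) : pivotAt A i j i j = 1 := by
  simp [pivotAt, hA]

theorem pivotAt_apply_of_ne (hA : A i j ≠ 0) {r : Fin m} (hr : r ≠ i) :
    pivotAt A i j r j = 0 := by
  simp [pivotAt, hr, hA]

theorem det_submatrix_pivotAt {ι : Type*} [Fintype ι] [DecidableEq ι] {e : ι → Fin m}
    (he : Injective e) {a₀ : ι} (ha₀ : e a₀ = i) (g : ι → Fin n) :
    ((pivotAt A i j).submatrix e g).det = (A i j)⁻¹ * (A.submatrix e g).det := by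
  set M := A.submatrix e g
  calc ((pivotAt A i j).submatrix e g).det = (M.updateRow a₀ ((A i j)⁻¹ • M a₀)).det := by
        refine Matrix.det_eq_of_forall_row_eq_smul_add_const
          (fun a => if a = a₀ then 0 else -A (e a) j) a₀ (if_pos rfl) fun a c => ?_
        obtain rfl | ha := eq_or_ne a a₀
        · simp [M, ha₀, pivotAt_row_self]
        · have hea : e a ≠ i := ha₀ ▸ he.ne ha
          simp only [M, Matrix.submatrix_apply, pivotAt_row_of_ne _ _ _ hea, Pi.sub_apply,
            Pi.smul_apply, smul_eq_mul, Matrix.updateRow_ne ha, Matrix.updateRow_self, if_neg ha,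
            ha₀]
          ring
    _ = (A i j)⁻¹ * M.det := by rw [Matrix.det_updateRow_smul, Matrix.updateRow_eq_self]

theorem span_pivotAt_rows_le {ι : Type*} {e : ι → Fin m} (hi : i ∈ range e) :
    span ℚ (range fun a => pivotAt A i j (e a)) ≤ span ℚ (range fun a => A (e a)) := by
  obtain ⟨a₀, rfl⟩ := hi
  have hpiv : A (e a₀) ∈ span ℚ (range fun a => A (e a)) := subset_span ⟨a₀, rfl⟩
  refine span_le.mpr (range_subset_iff.mpr fun a => ?_)
  obtain h | h := eq_or_ne (e a) (e a₀)
  · rw [h, pivotAt_row_self]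
    exact smul_mem _ _ hpiv
  · rw [pivotAt_row_of_ne _ _ _ h]
    exact sub_mem (subset_span ⟨a, rfl⟩) (smul_mem _ _ hpiv)

theorem equimodular_pivotAt_submatrix_of_mem (hTE : TotallyEquimodular A)
    {k : ℕ} (e : Fin k ↪ Fin m) (hi : i ∈ range e)
    (hli : LinearIndependent ℚ fun a => pivotAt A i j (e a)) :
    Equimodular ((pivotAt A i j).submatrix e id) := by
  obtain ⟨d, hd⟩ := (equimodular_submatrix_iff _ _).mp <|
    hTE k e (hli.of_span_le (span_pivotAt_rows_le hi))
  rw [equimodular_submatrix_iff]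
  obtain ⟨a₀, ha₀⟩ := hi
  refine ⟨|A i j|⁻¹ * d, fun g hg => ?_⟩
  rw [det_submatrix_pivotAt e.injective ha₀] at hg ⊢
  rw [abs_mul, abs_inv, hd g (right_ne_zero_of_mul hg)]

theorem equimodular_pivotAt_submatrix_of_notMem (hA : A i j ≠ 0) (hTE : TotallyEquimodular A)
    {k : ℕ} (e : Fin k ↪ Fin m) (hi : i ∉ range e)
    (hli : LinearIndependent ℚ fun a => pivotAt A i j (e a)) :
    Equimodular ((pivotAt A i j).submatrix e id) := by
  have hcol (a : Fin k) : pivotAt A i j (e a) j = 0 :=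
    pivotAt_apply_of_ne hA fun h => hi ⟨a, h⟩
  have hli' : LinearIndependent ℚ fun a => pivotAt A i j (Fin.Embedding.cons e hi a) := by
    have hrows : (fun a => pivotAt A i j (Fin.Embedding.cons e hi a)) =
        Fin.cons (pivotAt A i j i) fun a => pivotAt A i j (e a) := by
      ext a : 1
      cases a using Fin.cases <;> rfl
    rw [hrows]
    exact linearIndependent_finCons_of_apply_eq_zero j hli hcol
      (by rw [pivotAt_apply_self hA]; exact one_ne_zero)
  obtain ⟨d, hd⟩ := (equimodular_submatrix_iff _ _).mp <|
    equimodular_pivotAt_submatrix_of_mem hTE _ ⟨0, rfl⟩ hli'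
  rw [equimodular_submatrix_iff]
  refine ⟨d, fun g hg => ?_⟩
  have hj : j ∉ range g := by
    rintro ⟨b, hb⟩
    exact hg (Matrix.det_eq_zero_of_column_eq_zero b fun a => by simp [hb, hcol])
  have hdet :
      ((pivotAt A i j).submatrix (Fin.Embedding.cons e hi) (Fin.Embedding.cons g hj)).det =
        ((pivotAt A i j).submatrix e g).det :=
    Matrix.det_submatrix_finCons _ _ _ (pivotAt_apply_self hA) hcol
  rw [← hdet] at hg ⊢
  exact hd _ hg

end Pivot

theorem TotallyEquimodular.submatrix {m n m' n' : ℕ} {A : Matrix (Fin m) (Fin n) ℚ}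
    (hA : TotallyEquimodular A) (r : Fin m' ↪ Fin m) (c : Fin n' ↪ Fin n) :
    TotallyEquimodular (A.submatrix r c) := by
  intro k e hli
  obtain ⟨d, hd⟩ := hA k (e.trans r) (hli.of_comp (LinearMap.funLeft ℚ ℚ c))
  exact ⟨d, fun g => hd (g.trans c)⟩

theorem TotallyEquimodular.pivotAt {m n : ℕ} {A : Matrix (Fin m) (Fin n) ℚ} {i : Fin m}
    {j : Fin n} (hA : TotallyEquimodular A) (hij : A i j ≠ 0) :
    TotallyEquimodular (pivotAt A i j) := by
  intro k e hli
  by_cases hi : i ∈ range e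
  · exact equimodular_pivotAt_submatrix_of_mem hA e hi hli
  · exact equimodular_pivotAt_submatrix_of_notMem hij hA e hi hli

theorem TotallyEquimodular.trimAt {m n : ℕ} {A : Matrix (Fin (m + 1)) (Fin (n + 1)) ℚ}
    {i : Fin (m + 1)} {j : Fin (n + 1)} (hA : TotallyEquimodular A) (hij : A i j ≠ 0) :
    TotallyEquimodular (trimAt A i j) :=
  (hA.pivotAt hij).submatrix i.succAboveEmb j.succAboveEmb

theorem PTSeq.totallyEquimodular {X Y : Σ m n : ℕ, Matrix (Fin m) (Fin n) ℚ} (h : PTSeq X Y)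
    (hX : TotallyEquimodular X.2.2) : TotallyEquimodular Y.2.2 := by
  induction h with
  | refl => exact hX
  | pivot A i j hij _ ih => exact ih (hX.pivotAt hij)
  | trim A i j hij _ ih => exact ih (hX.trimAt hij)

theorem stmt4 {m n : ℕ} (A : Matrix (Fin m) (Fin n) ℚ) :
    TotallyEquimodular A ↔
      ∀ B : Σ m n : ℕ, Matrix (Fin m) (Fin n) ℚ,
        PTSeq ⟨m, n, A⟩ B → TotallyEquimodular B.2.2 :=
  ⟨fun hA _ hB => hB.totallyEquimodular hA, fun h => h _ (.refl _)⟩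
end

section
/- Let A be an invertible square rational matrix. Then A is totally equimodular if and only if the transpose of its inverse, (A^{-1})^T, is totally equimodular. -/
/-!
Jacobi's complementary minor identity: for invertible `A`, the `(g, e)` minor of `A⁻¹` equals,
up to sign, the minor of `A` on the complementary rows `eᶜ` and columns `gᶜ`, divided by
`det A`. So, in absolute value, the maximal minors of the rows `e` of `A⁻ᵀ` are the maximal
minors of the rows `eᶜ` of `A` divided by `|det A|`, and one family is equimodular iff the
other is. All rows of an invertible matrix are independent, and `A ↦ A⁻ᵀ` is an involution.
-/

open Matrix

theorem Matrix.det_mul_det_toBlocks₁₁_inv {R : Type*} [CommRing R] {m p : Type*}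
    [Fintype m] [Fintype p] [DecidableEq m] [DecidableEq p]
    (B : Matrix (m ⊕ p) (m ⊕ p) R) (hB : IsUnit B.det) :
    B.det * B⁻¹.toBlocks₁₁.det = B.toBlocks₂₂.det := by
  have key : B * fromBlocks B⁻¹.toBlocks₁₁ 0 B⁻¹.toBlocks₂₁ 1 =
      fromBlocks 1 B.toBlocks₁₂ 0 B.toBlocks₂₂ := by
    have h := congrFun₂ (mul_nonsing_inv B hB)
    ext (i | i) (j | j)
    · simpa [mul_apply, Fintype.sum_sum_type, one_apply, toBlocks₁₁, toBlocks₂₁]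
        using h (.inl i) (.inl j)
    · simp [mul_apply, Fintype.sum_sum_type, one_apply, toBlocks₁₂]
    · simpa [mul_apply, Fintype.sum_sum_type, one_apply, toBlocks₁₁, toBlocks₂₁]
        using h (.inr i) (.inl j)
    · simp [mul_apply, Fintype.sum_sum_type, one_apply, toBlocks₂₂]
  simpa [det_fromBlocks_zero₁₂, det_fromBlocks_zero₂₁] using congrArg det key

theorem Matrix.abs_det_mul_abs_det_inv_submatrix {R : Type*} [CommRing R] [LinearOrder R]
    [IsStrictOrderedRing R] {n m p : Type*} [Fintype n] [Fintype m] [Fintype p]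
    [DecidableEq n] [DecidableEq m] [DecidableEq p] (A : Matrix n n R) (hA : IsUnit A.det)
    (e g : m ⊕ p ≃ n) :
    |A.det| * |(A⁻¹.submatrix (g ∘ Sum.inl) (e ∘ Sum.inl)).det| =
      |(A.submatrix (e ∘ Sum.inr) (g ∘ Sum.inr)).det| := by
  have hB : IsUnit (A.submatrix e g).det := by
    rwa [← isUnit_iff_isUnit_det, isUnit_submatrix_equiv, isUnit_iff_isUnit_det]
  have jacobi := (A.submatrix e g).det_mul_det_toBlocks₁₁_inv hB
  rw [inv_submatrix_equiv] at jacobi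
  rw [← abs_det_submatrix_equiv_equiv e g, ← abs_mul]
  exact congrArg abs jacobi

namespace Function.Embedding

variable {k n : ℕ} (f : Fin k ↪ Fin n)

noncomputable def finSumComplEquiv : Fin k ⊕ Fin (n - k) ≃ Fin n :=
  ((Equiv.ofInjective f f.injective).sumCongr (Fintype.equivFinOfCardEq (by
      rw [Fintype.card_subtype_compl, Fintype.card_range, Fintype.card_fin,
        Fintype.card_fin])).symm).trans
    (Equiv.sumCompl (· ∈ Set.range f))

noncomputable def finCompl : Fin (n - k) ↪ Fin n :=
  Function.Embedding.inr.trans f.finSumComplEquiv.toEmbedding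

@[simp]
theorem finSumComplEquiv_comp_inl : f.finSumComplEquiv ∘ Sum.inl = f := by
  ext; simp [finSumComplEquiv]

@[simp]
theorem finSumComplEquiv_comp_inr : f.finSumComplEquiv ∘ Sum.inr = f.finCompl := rfl

end Function.Embedding

theorem TotallyEquimodular.inv_transpose {n : ℕ} {A : Matrix (Fin n) (Fin n) ℚ}
    (hA : IsUnit A.det) (hTE : TotallyEquimodular A) : TotallyEquimodular A⁻¹ᵀ := by
  intro k e _
  have hrows := linearIndependent_rows_of_isUnit ((isUnit_iff_isUnit_det A).mpr hA)
  obtain ⟨d, hd⟩ := hTE _ e.finCompl (hrows.comp _ e.finCompl.injective)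
  refine ⟨d / |A.det|, fun g hg => ?_⟩
  change (A⁻¹.submatrix g e)ᵀ.det ≠ 0 at hg
  change |(A⁻¹.submatrix g e)ᵀ.det| = _
  rw [det_transpose] at hg ⊢
  have jacobi := A.abs_det_mul_abs_det_inv_submatrix hA e.finSumComplEquiv g.finSumComplEquiv
  simp only [Function.Embedding.finSumComplEquiv_comp_inl,
    Function.Embedding.finSumComplEquiv_comp_inr] at jacobi
  have hcompl : (A.submatrix e.finCompl g.finCompl).det ≠ 0 := by
    rw [← abs_ne_zero, ← jacobi]
    exact mul_ne_zero (abs_ne_zero.mpr hA.ne_zero) (abs_ne_zero.mpr hg)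
  have hcompl_abs : |(A.submatrix e.finCompl g.finCompl).det| = d := hd g.finCompl hcompl
  rw [← hcompl_abs, ← jacobi]
  field_simp [hA.ne_zero]

theorem stmt5 {n : ℕ} (A : Matrix (Fin n) (Fin n) ℚ) (hA : IsUnit A.det) :
    TotallyEquimodular A ↔ TotallyEquimodular (A⁻¹).transpose := by
  refine ⟨TotallyEquimodular.inv_transpose hA, fun h => ?_⟩
  have hA' : IsUnit A⁻¹ᵀ.det := by rwa [det_transpose, isUnit_nonsing_inv_det_iff]
  simpa [transpose_nonsing_inv, nonsing_inv_nonsing_inv A hA] using h.inv_transpose hA'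
end

section
/- If A is a square 0,±1 minimally non-totally unimodular matrix, then det(A) = ±2, the inverse A^{-1} has all entries equal to ±1/2, each row and each column of A has an even number of nonzero entries, and the sum of all entries of A is congruent to 2 modulo 4. -/
/-- All entries of `A` are `0`, `1` or `-1`. -/
def ZeroPmOne {m n : ℕ} (A : Matrix (Fin m) (Fin n) ℚ) : Prop :=
  ∀ i j, A i j = 0 ∨ A i j = 1 ∨ A i j = -1

/-- A linearly independent set of `0,±1` vectors whose matrix is totally equimodular. -/
def TeSet {m n : ℕ} (A : Matrix (Fin m) (Fin n) ℚ) : Prop :=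
  ZeroPmOne A ∧ LinearIndependent ℚ (fun i => A i) ∧ TotallyEquimodular A

/-- A linearly independent set of `0,±1` vectors whose matrix is totally unimodular. -/
def TuSet {m n : ℕ} (A : Matrix (Fin m) (Fin n) ℚ) : Prop :=
  ZeroPmOne A ∧ LinearIndependent ℚ (fun i => A i) ∧ A.IsTotallyUnimodular

/-- A te-set, not a tu-set, all of whose proper subsets of rows are tu-sets. -/
def TeLace {m n : ℕ} (A : Matrix (Fin m) (Fin n) ℚ) : Prop :=
  TeSet A ∧ ¬ TuSet A ∧
    ∀ (k : ℕ) (e : Fin k ↪ Fin m), k < m → TuSet (A.submatrix e id)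

/-- `A` is not totally unimodular but every proper submatrix of `A` is. -/
def MinNonTU {m n : ℕ} (A : Matrix (Fin m) (Fin n) ℚ) : Prop :=
  ¬ A.IsTotallyUnimodular ∧
    ∀ (k l : ℕ) (e : Fin k ↪ Fin m) (f : Fin l ↪ Fin n), k < m ∨ l < n →
      (A.submatrix e f).IsTotallyUnimodular

/-!
Every proper square submatrix of `A` is totally unimodular, so all proper minors, and hence all
entries of `adj A`, lie in `{0, ±1}`, while `det A ∉ {0, ±1}`. The key step: if `A w = b` and `w`
vanishes somewhere, then on the support `S` of `w` some rows `T` give a nonsingular proper block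
`M = A[T, S]`; it is unimodular, so `M⁻¹` has entries in `{0, ±1}` and every entry of `w` on `S`
is a `{0, ±1}`-combination of distinct entries of `b`. For `w` a column of `adj A`, with
`b = det A • eⱼ`, this shows that no entry of `adj A` vanishes. For `w` the difference of two
columns of `adj A`, whose entries are `0` or `±2`, with `b = det A • (eⱼ - eⱼ')`, it forces
`det A = ±2`. Finally `A adj A = adj A A = det A • 1`: off the diagonal this is a sum of `±1` over
the nonzero entries of a row (column), which therefore has even size; and summing `A adj A` over
one column gives `det A`, which differs from the sum of all entries of `A` by
`∑ₖ colsumₖ (1 - adjₖⱼ)`, a sum of products of two even numbers.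
-/

open Matrix Finset

section SignRange

variable {R : Type*} [CommRing R]

lemma mem_range_signType_cast_iff {x : R} :
    x ∈ Set.range SignType.cast ↔ x = 0 ∨ x = 1 ∨ x = -1 := by
  simp [SignType.range_eq, or_comm]

lemma mul_mem_range_signType_cast {x y : R} (hx : x ∈ Set.range SignType.cast)
    (hy : y ∈ Set.range SignType.cast) : x * y ∈ Set.range SignType.cast := by
  obtain ⟨a, rfl⟩ := hx
  obtain ⟨b, rfl⟩ := hy
  exact ⟨a * b, SignType.coe_mul a b⟩

lemma neg_one_pow_mem_range_signType_cast (k : ℕ) :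
    (-1 : R) ^ k ∈ Set.range SignType.cast :=
  ⟨(-1) ^ k, by simp⟩

lemma units_intCast_mem_range_signType_cast (u : ℤˣ) :
    ((u : ℤ) : R) ∈ Set.range SignType.cast := by
  rcases Int.units_eq_one_or u with rfl | rfl
  exacts [⟨1, by simp⟩, ⟨-1, by simp⟩]

lemma ring_inverse_mem_range_signType_cast {x : R} (hx : x ∈ Set.range SignType.cast) :
    Ring.inverse x ∈ Set.range SignType.cast := by
  obtain ⟨a, rfl⟩ := hx
  refine ⟨a, ?_⟩
  cases a
  · simp
  · simpa using (Ring.inverse_unit (-1 : Rˣ)).symm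
  · simp

lemma sum_mul_pi_single_comp_mem_range_signType_cast {s n : ℕ} (T : Fin s ↪ Fin n)
    {r : Fin s → R} (hr : ∀ t, r t ∈ Set.range SignType.cast) (j : Fin n) :
    ∑ t, r t * (Pi.single j 1 : Fin n → R) (T t) ∈ Set.range SignType.cast := by
  by_cases h : ∃ t₀, T t₀ = j
  · obtain ⟨t₀, rfl⟩ := h
    rw [Fintype.sum_eq_single t₀ fun t ht => by simp [T.injective.ne ht]]
    simpa using hr t₀
  · rw [not_exists] at h
    exact ⟨0, by simp [h]⟩

lemma mem_range_signType_cast_of_mul_mem {K : Type*} [Field K] {a x : K}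
    (hx : x ∈ Set.range SignType.cast) (hax : a * x ∈ Set.range SignType.cast)
    (hax0 : a * x ≠ 0) : a ∈ Set.range SignType.cast := by
  obtain ⟨b, rfl⟩ := hx
  cases b
  · simp at hax0
  · simpa using mul_mem_range_signType_cast hax ⟨-1, rfl⟩
  · simpa using hax

end SignRange

section Parity

variable {K : Type*} [Field K] [LinearOrder K] [IsStrictOrderedRing K] {ι : Type*} [Fintype ι]
  {f : ι → K}

lemma natCast_card_filter_ne_zero_eq (hf : ∀ k, f k ∈ Set.range SignType.cast) :
    (#{k | f k ≠ 0} : K) = ∑ k, f k + 2 * #{k | f k = -1} := by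
  simp only [Finset.natCast_card_filter, Finset.mul_sum, ← Finset.sum_add_distrib]
  refine Finset.sum_congr rfl fun k _ => ?_
  obtain ⟨a, ha⟩ := hf k
  cases a <;> simp [← ha] <;> norm_num

lemma even_card_filter_ne_zero_of_sum_eq_zero (hf : ∀ k, f k ∈ Set.range SignType.cast)
    (hsum : ∑ k, f k = 0) : Even #{k | f k ≠ 0} := by
  have h := natCast_card_filter_ne_zero_eq hf
  rw [hsum, zero_add] at h
  exact ⟨#{k | f k = -1}, by exact_mod_cast h.trans (two_mul _)⟩

lemma exists_sum_eq_two_mul_of_even_card (hf : ∀ k, f k ∈ Set.range SignType.cast)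
    (heven : Even #{k | f k ≠ 0}) : ∃ μ : ℤ, ∑ k, f k = 2 * μ := by
  obtain ⟨t, ht⟩ := heven
  have h := natCast_card_filter_ne_zero_eq hf
  rw [ht] at h
  exact ⟨t - #{k | f k = -1}, by push_cast at h ⊢; linarith⟩

end Parity

namespace Matrix

lemma mulVec_adjugate_mulVec {R : Type*} [CommRing R] {n : ℕ} (A : Matrix (Fin n) (Fin n) R)
    (b : Fin n → R) : A *ᵥ (A.adjugate *ᵥ b) = A.det • b := by
  rw [← cramer_eq_adjugate_mulVec, mulVec_cramer]

lemma exists_isUnit_submatrix_of_linearIndependent_col {K : Type*} [Field K] {m s : ℕ}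
    {B : Matrix (Fin m) (Fin s) K} (hB : LinearIndependent K B.col) :
    ∃ T : Fin s ↪ Fin m, IsUnit (B.submatrix T id) := by
  have hspan : Submodule.span K (Set.range B.row) = ⊤ := by
    apply Submodule.eq_top_of_finrank_eq
    rw [← B.rank_eq_finrank_span_row, rank_eq_finrank_span_cols, finrank_span_eq_card hB]
    simp
  obtain ⟨κ, a, ha, hsp, hli⟩ := exists_linearIndependent' K B.row
  have : Finite κ := Finite.of_injective a ha
  have : Fintype κ := Fintype.ofFinite κ
  have hcard : Fintype.card κ = s := by
    rw [← finrank_span_eq_card hli, hsp, hspan]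
    simp
  let e : Fin s ≃ κ := (Fintype.equivFinOfCardEq hcard).symm
  refine ⟨e.toEmbedding.trans ⟨a, ha⟩, ?_⟩
  rw [← linearIndependent_rows_iff_isUnit]
  exact hli.comp e e.injective

def ProperMinorsUnimodular {R : Type*} [CommRing R] {n : ℕ} (A : Matrix (Fin n) (Fin n) R) :
    Prop :=
  ∀ k < n, ∀ f g : Fin k ↪ Fin n, (A.submatrix f g).det ∈ Set.range SignType.cast

namespace ProperMinorsUnimodular

section CommRing

variable {R : Type*} [CommRing R] {n : ℕ} {A : Matrix (Fin n) (Fin n) R}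

lemma submatrix (hA : A.ProperMinorsUnimodular) {s : ℕ} (hs : s ≤ n) (f g : Fin s ↪ Fin n) :
    (A.submatrix f g).ProperMinorsUnimodular :=
  fun k hk f' g' => hA k (hk.trans_le hs) (f'.trans f) (g'.trans g)

lemma isTotallyUnimodular (hA : A.ProperMinorsUnimodular)
    (hdet : A.det ∈ Set.range SignType.cast) : A.IsTotallyUnimodular := by
  intro k f g hf hg
  obtain hk | rfl := (by simpa using Fintype.card_le_of_injective f hf : k ≤ n).lt_or_eq
  · exact hA k hk ⟨f, hf⟩ ⟨g, hg⟩
  let σ := Equiv.ofBijective f hf.bijective_of_finite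
  let τ := Equiv.ofBijective g hg.bijective_of_finite
  have hsub : A.submatrix f g = (A.submatrix id τ).submatrix σ id := rfl
  rw [hsub, det_permute, det_permute']
  exact mul_mem_range_signType_cast (units_intCast_mem_range_signType_cast _)
    (mul_mem_range_signType_cast (units_intCast_mem_range_signType_cast _) hdet)

lemma adjugate_apply_mem (hA : A.ProperMinorsUnimodular) (i j : Fin n) :
    A.adjugate i j ∈ Set.range SignType.cast := by
  cases n with
  | zero => exact i.elim0
  | succ m =>
    rw [adjugate_fin_succ_eq_det_submatrix]
    exact mul_mem_range_signType_cast (neg_one_pow_mem_range_signType_cast _)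
      (hA m m.lt_succ_self j.succAboveEmb i.succAboveEmb)

lemma inv_apply_mem (hA : A.ProperMinorsUnimodular) (hdet : A.det ∈ Set.range SignType.cast)
    (i j : Fin n) : A⁻¹ i j ∈ Set.range SignType.cast := by
  rw [inv_def, smul_apply, smul_eq_mul]
  exact mul_mem_range_signType_cast (ring_inverse_mem_range_signType_cast hdet)
    (hA.adjugate_apply_mem i j)

end CommRing

section Field

variable {K : Type*} [Field K] {n : ℕ} {A : Matrix (Fin n) (Fin n) K}

theorem exists_eq_sum_mul_mulVec (hA : A.ProperMinorsUnimodular) (hdet : A.det ≠ 0)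
    {w : Fin n → K} (hw : w ≠ 0) {k₀ : Fin n} (hk₀ : w k₀ = 0) :
    ∃ k, w k ≠ 0 ∧ ∃ (s : ℕ) (T : Fin s ↪ Fin n) (r : Fin s → K),
      (∀ t, r t ∈ Set.range SignType.cast) ∧ w k = ∑ t, r t * (A *ᵥ w) (T t) := by
  classical
  set S := ({k | w k ≠ 0} : Finset (Fin n))
  have hsn : #S < n := by
    simpa using Finset.card_lt_univ_of_notMem (s := S) (by simpa [S] using hk₀)
  have hs0 : 0 < #S := by
    obtain ⟨k, hk⟩ := Function.ne_iff.mp hw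
    exact Finset.card_pos.2 ⟨k, by simpa [S] using hk⟩
  set g := (S.orderEmbOfFin rfl).toEmbedding
  have hg : ∀ r, w (g r) ≠ 0 := fun r => (Finset.mem_filter.1 (S.orderEmbOfFin_mem rfl r)).2
  have hg' : ∀ k ∉ Set.range g, w k = 0 := fun k hk => by
    by_contra h
    exact hk (by simpa [g, S, Finset.range_orderEmbOfFin] using h)
  have hcols : LinearIndependent K (A.submatrix id g).col :=
    (linearIndependent_cols_iff_isUnit.2 ((isUnit_iff_isUnit_det A).2 hdet.isUnit)).comp g
      g.injective
  obtain ⟨T, hT⟩ := exists_isUnit_submatrix_of_linearIndependent_col hcols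
  set M := A.submatrix T g
  have hMw : M *ᵥ (w ∘ g) = (A *ᵥ w) ∘ T := by
    ext t
    exact Fintype.sum_of_injective g g.injective _ _ (fun k hk => by simp [hg' k hk]) fun _ => rfl
  have hw_eq : w ∘ g = M⁻¹ *ᵥ ((A *ᵥ w) ∘ T) := by
    rw [← hMw, mulVec_mulVec, nonsing_inv_mul _ ((isUnit_iff_isUnit_det M).1 hT), one_mulVec]
  let i : Fin #S := ⟨0, hs0⟩
  exact ⟨g i, hg i, #S, T, M⁻¹ i, (hA.submatrix hsn.le T g).inv_apply_mem (hA _ hsn T g) i,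
    congrFun hw_eq i⟩

theorem adjugate_apply_ne_zero (hA : A.ProperMinorsUnimodular)
    (hdet : A.det ∉ Set.range SignType.cast) (i j : Fin n) : A.adjugate i j ≠ 0 := by
  intro h0
  have hd0 : A.det ≠ 0 := fun h => hdet ⟨0, by simp [h]⟩
  set w := A.adjugate *ᵥ Pi.single j 1
  have hAw : A *ᵥ w = A.det • Pi.single j 1 := mulVec_adjugate_mulVec A _
  have hw : w ≠ 0 := fun h => hd0 (by simpa [h, eq_comm] using congrFun hAw j)
  obtain ⟨k, hk, s, T, r, hr, hwk⟩ := hA.exists_eq_sum_mul_mulVec hd0 hw (k₀ := i)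
    (by simp [w, h0])
  have hwk' : w k = A.det * ∑ t, r t * (Pi.single j 1 : Fin n → K) (T t) := by
    simp only [hwk, hAw, Finset.mul_sum, Pi.smul_apply, smul_eq_mul]
    exact Finset.sum_congr rfl fun t _ => by ring
  refine hdet (mem_range_signType_cast_of_mul_mem
    (sum_mul_pi_single_comp_mem_range_signType_cast T hr j) ?_ ?_)
  · rw [← hwk']
    simpa [w, mulVec_single_one] using hA.adjugate_apply_mem k j
  · rwa [← hwk']

theorem adjugate_apply_eq_one_or_neg_one (hA : A.ProperMinorsUnimodular)
    (hdet : A.det ∉ Set.range SignType.cast) (i j : Fin n) :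
    A.adjugate i j = 1 ∨ A.adjugate i j = -1 :=
  (mem_range_signType_cast_iff.1 (hA.adjugate_apply_mem i j)).resolve_left
    (hA.adjugate_apply_ne_zero hdet i j)

end Field

theorem det_eq_two_or_neg_two {K : Type*} [Field K] [LinearOrder K] [IsStrictOrderedRing K]
    {n : ℕ} [Nontrivial (Fin n)] {A : Matrix (Fin n) (Fin n) K} (hA : A.ProperMinorsUnimodular)
    (hdet : A.det ∉ Set.range SignType.cast) : A.det = 2 ∨ A.det = -2 := by
  obtain ⟨j₀, j₁, hj⟩ := exists_pair_ne (Fin n)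
  have hadj := hA.adjugate_apply_eq_one_or_neg_one hdet
  have hd0 : A.det ≠ 0 := fun h => hdet ⟨0, by simp [h]⟩
  set v := A.adjugate *ᵥ (Pi.single j₀ 1 - Pi.single j₁ 1)
  have hv : ∀ k, v k = A.adjugate k j₀ - A.adjugate k j₁ := by
    simp [v, mulVec_sub]
  have hAv : A *ᵥ v = A.det • (Pi.single j₀ 1 - Pi.single j₁ 1) := mulVec_adjugate_mulVec A _
  have hv0 : v ≠ 0 := fun h => by
    have := congrFun hAv j₀
    rw [h, mulVec_zero] at this
    simp [hj] at this
    exact hd0 this.symm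
  -- if `v` had no zero entry, columns `j₀` and `j₁` of the adjugate would be opposite
  obtain ⟨k₀, hk₀⟩ : ∃ k, v k = 0 := by
    by_contra! h
    have hu : A.adjugate *ᵥ (Pi.single j₀ 1 + Pi.single j₁ 1) = 0 := by
      ext k
      have := h k
      rw [hv] at this
      rcases hadj k j₀ with h₀ | h₀ <;> rcases hadj k j₁ with h₁ | h₁ <;>
        simp_all [mulVec_add]
    have := congrFun (mulVec_adjugate_mulVec A (Pi.single j₀ 1 + Pi.single j₁ 1)) j₀
    simp [hu, hj] at this
    exact hd0 this.symm
  obtain ⟨k, hk, s, T, r, hr, hvk⟩ := hA.exists_eq_sum_mul_mulVec hd0 hv0 hk₀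
  obtain ⟨x, hx⟩ := sum_mul_pi_single_comp_mem_range_signType_cast T hr j₀
  obtain ⟨y, hy⟩ := sum_mul_pi_single_comp_mem_range_signType_cast T hr j₁
  have hvk' : v k = A.det * (x - y) := by
    rw [hvk, hAv, hx, hy, mul_sub, Finset.mul_sum, Finset.mul_sum, ← Finset.sum_sub_distrib]
    refine Finset.sum_congr rfl fun t _ => ?_
    simp only [Pi.smul_apply, Pi.sub_apply, smul_eq_mul]
    ring
  simp only [mem_range_signType_cast_iff, not_or] at hdet
  rw [hv] at hk hvk'
  rcases hadj k j₀ with h₀ | h₀ <;> rcases hadj k j₁ with h₁ | h₁ <;> cases x <;> cases y <;>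
    simp [h₀, h₁] at hk hvk' <;> norm_num at hvk' <;>
    first
      | (left; linarith)
      | (right; linarith)
      | (exfalso; exact hdet.2.1 (by linarith))
      | (exfalso; exact hdet.2.2 (by linarith))

end ProperMinorsUnimodular

lemma two_le_of_det_notMem_range {R : Type*} [CommRing R] {n : ℕ}
    {A : Matrix (Fin n) (Fin n) R} (hA : ∀ i j, A i j ∈ Set.range SignType.cast)
    (hdet : A.det ∉ Set.range SignType.cast) : 2 ≤ n := by
  by_contra! hn
  interval_cases n
  · exact hdet ⟨1, by simp⟩
  · exact hdet (by simpa using hA 0 0)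

section Parity

variable {K : Type*} [Field K] [LinearOrder K] [IsStrictOrderedRing K] {n : ℕ}
  {A : Matrix (Fin n) (Fin n) K}

lemma even_card_filter_row_ne_zero (hA : ∀ i j, A i j ∈ Set.range SignType.cast)
    (hadj : ∀ i j, A.adjugate i j = 1 ∨ A.adjugate i j = -1) {i j : Fin n} (hij : i ≠ j) :
    Even #{k | A i k ≠ 0} := by
  have hsum : ∑ k, A i k * A.adjugate k j = 0 := by
    have := congrFun (mulVec_adjugate_mulVec A (Pi.single j 1)) i
    rw [mulVec_single_one] at this
    simpa [mulVec, dotProduct, hij] using this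
  have hsupp : ∀ k, A i k * A.adjugate k j ≠ 0 ↔ A i k ≠ 0 := fun k => by
    rcases hadj k j with h | h <;> simp [h]
  simpa only [hsupp] using even_card_filter_ne_zero_of_sum_eq_zero
    (fun k => mul_mem_range_signType_cast (hA i k)
      (mem_range_signType_cast_iff.2 (Or.inr (hadj k j)))) hsum

lemma even_card_filter_col_ne_zero (hA : ∀ i j, A i j ∈ Set.range SignType.cast)
    (hadj : ∀ i j, A.adjugate i j = 1 ∨ A.adjugate i j = -1) {i j : Fin n} (hij : i ≠ j) :
    Even #{k | A k j ≠ 0} :=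
  even_card_filter_row_ne_zero (A := Aᵀ) (fun i j => hA j i)
    (fun i j => by rw [← adjugate_transpose]; exact hadj j i) hij.symm

lemma exists_sum_sum_eq_det_add_four_mul [Nonempty (Fin n)]
    (hA : ∀ i j, A i j ∈ Set.range SignType.cast) (hcols : ∀ j, Even #{i | A i j ≠ 0})
    (hadj : ∀ i j, A.adjugate i j = 1 ∨ A.adjugate i j = -1) :
    ∃ z : ℤ, ∑ i, ∑ j, A i j = A.det + 4 * z := by
  obtain ⟨j₀⟩ := ‹Nonempty (Fin n)›
  set c := A.adjugate.col j₀
  have hAc : ∑ i, (A *ᵥ c) i = A.det := by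
    have := congrArg (∑ i, · i) (mulVec_adjugate_mulVec A (Pi.single j₀ 1))
    rw [mulVec_single_one] at this
    simpa [Pi.single_apply] using this
  have hAc' : ∑ i, (A *ᵥ c) i = ∑ j, (∑ i, A i j) * c j := by
    simp only [mulVec, dotProduct, Finset.sum_mul]
    exact Finset.sum_comm
  choose μ hμ using fun j => exists_sum_eq_two_mul_of_even_card (fun i => hA i j) (hcols j)
  -- column `j` contributes `colsum j * (1 - c j)`, and both factors are even
  refine ⟨∑ j, if c j = 1 then 0 else μ j, ?_⟩
  rw [← hAc, hAc', show ∑ i, ∑ j, A i j = ∑ j, ∑ i, A i j from Finset.sum_comm, Int.cast_sum,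
    Finset.mul_sum, ← Finset.sum_add_distrib]
  refine Finset.sum_congr rfl fun j _ => ?_
  rw [hμ j]
  rcases hadj j j₀ with h | h
  · simp [c, h]
  · norm_num [c, h]
    ring

end Parity

end Matrix

namespace MinNonTU

variable {n : ℕ} {A : Matrix (Fin n) (Fin n) ℚ}

lemma properMinorsUnimodular (hA : MinNonTU A) : A.ProperMinorsUnimodular := fun k hk f g => by
  simpa using hA.2 k k f g (Or.inl hk) k id id Function.injective_id Function.injective_id

lemma det_notMem_range (hA : MinNonTU A) : A.det ∉ Set.range SignType.cast := fun h =>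
  hA.1 (hA.properMinorsUnimodular.isTotallyUnimodular h)

end MinNonTU

theorem stmt7 {n : ℕ} (A : Matrix (Fin n) (Fin n) ℚ)
    (h01 : ZeroPmOne A) (hA : MinNonTU A) :
    (A.det = 2 ∨ A.det = -2) ∧
    (∀ i j, A⁻¹ i j = 1 / 2 ∨ A⁻¹ i j = -(1 / 2)) ∧
    (∀ i : Fin n, Even (Finset.univ.filter fun j => A i j ≠ 0).card) ∧
    (∀ j : Fin n, Even (Finset.univ.filter fun i => A i j ≠ 0).card) ∧
    (∃ z : ℤ, (∑ i, ∑ j, A i j) = 4 * z + 2) := by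
  have hP := hA.properMinorsUnimodular
  have hdet := hA.det_notMem_range
  have hent (i j : Fin n) : A i j ∈ Set.range SignType.cast :=
    mem_range_signType_cast_iff.2 (h01 i j)
  have : Nontrivial (Fin n) := Fin.nontrivial_iff_two_le.2 (two_le_of_det_notMem_range hent hdet)
  have hadj := hP.adjugate_apply_eq_one_or_neg_one hdet
  have hdet2 := hP.det_eq_two_or_neg_two hdet
  have hcols (j : Fin n) : Even #{i | A i j ≠ 0} :=
    even_card_filter_col_ne_zero hent hadj (exists_ne j).choose_spec
  refine ⟨hdet2, fun i j => ?_, fun i => ?_, hcols, ?_⟩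
  · rw [Matrix.inv_def, Matrix.smul_apply, smul_eq_mul, Ring.inverse_eq_inv']
    rcases hdet2 with hd | hd <;> rcases hadj i j with ha | ha <;> simp [hd, ha]
  · exact even_card_filter_row_ne_zero hent hadj (exists_ne i).choose_spec.symm
  · obtain ⟨z, hz⟩ := exists_sum_sum_eq_det_add_four_mul hent hcols hadj
    rcases hdet2 with hd | hd
    · exact ⟨z, by rw [hz, hd]; ring⟩
    · exact ⟨z - 1, by rw [hz, hd]; push_cast; ring⟩
end

section
/- Let A and B be disjoint finite sets of integer vectors in Z^n such that A ∪ B is linearly independent and gcddet(A ∪ B) = gcddet(A)·gcddet(B) (lattice orthogonality). Then the number of integer points in the half-open zonotope Z^<(A ∪ B) equals the product of the numbers of integer points in Z^<(A) and Z^<(B). -/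
/-!
For a linearly independent family `S`, the integer points of `Z^<(S)` form a system of
representatives of `M ⧸ L`, where `L` is the lattice spanned by `S` and `M = ℚS ∩ ℤⁿ` its
saturation: reduce the rational coordinates of a point of `M` modulo `1`. Writing `S = U * B`
with `B` a basis of `M`, the index `[M : L]` is `|det U|`, and every maximal minor of `S` is
`det U` times the corresponding minor of `B`. The minors of `B` are coprime because `M` is
saturated, so `#(Z^<(S) ∩ ℤⁿ) = gcdDet S`; lattice orthogonality then turns this identity for
`A ∪ B`, `A` and `B` into the theorem.
-/

/-- The gcd of the maximal (`k × k`) minors of the integer matrix whose rows are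
the vectors of the family `A`. -/
noncomputable def gcdDet {k n : ℕ} (A : Fin k → Fin n → ℤ) : ℕ :=
  Finset.univ.gcd fun g : Fin k ↪ Fin n =>
    (Matrix.of fun i j => A i (g j)).det.natAbs

/-- The integer points of the half-open zonotope
`Z^<(A) = { Σ_a λ_a a : 0 ≤ λ_a < 1 }` generated by the family `A`. -/
def zonoPts {k n : ℕ} (A : Fin k → Fin n → ℤ) : Set (Fin n → ℤ) :=
  {x | ∃ c : Fin k → ℚ, (∀ i, 0 ≤ c i ∧ c i < 1) ∧
    ∀ j, (x j : ℚ) = ∑ i, c i * (A i j : ℚ)}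

open Set Submodule Matrix Module

lemma exists_det_ne_zero_of_linearIndependent {K m n : Type*} [Field K] [Fintype m]
    [DecidableEq m] [Fintype n] {v : m → n → K} (hv : LinearIndependent K v) :
    ∃ g : m ↪ n, (Matrix.of fun i j => v i (g j)).det ≠ 0 := by
  obtain ⟨κ, a, ha, hspan, hli⟩ := exists_linearIndependent' K (Matrix.of v).col
  have : Fintype κ := Fintype.ofInjective a ha
  have hcard : Fintype.card m = Fintype.card κ := by
    rw [← finrank_span_eq_card hli, hspan, ← rank_eq_finrank_span_cols,
      LinearIndependent.rank_matrix (M := Matrix.of v) hv]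
  let e := Fintype.equivOfCardEq hcard
  refine ⟨e.toEmbedding.trans ⟨a, ha⟩, ?_⟩
  rw [← isUnit_iff_ne_zero, ← isUnit_iff_isUnit_det, ← linearIndependent_cols_iff_isUnit]
  exact hli.comp e e.injective

section gcdDet

variable {k n : ℕ}

lemma gcdDet_mul (U : Matrix (Fin k) (Fin k) ℤ) (B : Fin k → Fin n → ℤ) :
    gcdDet (U * Matrix.of B) = U.det.natAbs * gcdDet B := by
  have hminor (g : Fin k ↪ Fin n) :
      (Matrix.of fun i j => (U * Matrix.of B) i (g j)) = U * Matrix.of fun i j => B i (g j) := by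
    ext i j
    simp [Matrix.mul_apply]
  simp only [gcdDet, hminor, det_mul, Int.natAbs_mul, Finset.gcd_mul_left, normalize_eq]

lemma not_linearIndependent_zmod_of_dvd_gcdDet {p : ℕ} [Fact p.Prime] {B : Fin k → Fin n → ℤ}
    (hp : p ∣ gcdDet B) : ¬ LinearIndependent (ZMod p) fun i j => (B i j : ZMod p) := by
  intro hB
  obtain ⟨g, hg⟩ := exists_det_ne_zero_of_linearIndependent hB
  apply hg
  have hdvd : (p : ℤ) ∣ (Matrix.of fun i j => B i (g j)).det :=
    Int.natCast_dvd.mpr (hp.trans (Finset.gcd_dvd (Finset.mem_univ g)))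
  rw [← (ZMod.intCast_zmod_eq_zero_iff_dvd _ p).mpr hdvd]
  exact (RingHom.map_det (Int.castRingHom (ZMod p)) (Matrix.of fun i j => B i (g j))).symm

theorem gcdDet_basis_eq_one {N : Submodule ℤ (Fin n → ℤ)}
    (hN : ∀ (p : ℤ) x, p ≠ 0 → p • x ∈ N → x ∈ N) (b : Basis (Fin k) ℤ N) :
    gcdDet (fun i => (b i : Fin n → ℤ)) = 1 := by
  set B : Fin k → Fin n → ℤ := fun i => b i
  -- A dependence of `B` mod `p` lifts to `w` with `p ∣ ∑ wᵢ Bᵢ`; saturation puts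
  -- `(∑ wᵢ Bᵢ) / p` in `N`, and comparing coordinates in the basis `b` forces `p ∣ wᵢ`.
  by_contra hne
  obtain ⟨p, hp, hpB⟩ := Nat.exists_prime_and_dvd hne
  have : Fact p.Prime := ⟨hp⟩
  have hdep := not_linearIndependent_zmod_of_dvd_gcdDet hpB
  rw [Fintype.not_linearIndependent_iff] at hdep
  obtain ⟨c, hc, i₀, hci₀⟩ := hdep
  choose w hw using fun i => ZMod.intCast_surjective (c i)
  have hdvd (j : Fin n) : (p : ℤ) ∣ ∑ i, w i * B i j := by
    rw [← ZMod.intCast_zmod_eq_zero_iff_dvd]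
    simpa [← hw] using congrFun hc j
  choose y hy using hdvd
  have hpy : (p : ℤ) • y = ∑ i, w i • B i := by
    ext j
    simp [Finset.sum_apply, hy]
  have hyN : y ∈ N :=
    hN p y (by exact_mod_cast hp.ne_zero) (hpy ▸ N.sum_mem fun i _ => N.smul_mem (w i) (b i).2)
  have hw₀ : w i₀ = p * b.repr ⟨y, hyN⟩ i₀ := by
    refine (b.linearIndependent.map' N.subtype N.ker_subtype).eq_coords_of_eq
      (f := w) (g := fun i => p * b.repr ⟨y, hyN⟩ i) ?_ i₀
    calc ∑ i, w i • B i = (p : ℤ) • y := hpy.symm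
      _ = (p : ℤ) • ((∑ i, b.repr ⟨y, hyN⟩ i • b i : N) : Fin n → ℤ) := by rw [b.sum_repr]
      _ = _ := by simp only [Submodule.coe_sum, Submodule.coe_smul, Finset.smul_sum, smul_smul]; rfl
  apply hci₀
  simp [← hw, hw₀]

end gcdDet

section saturation

variable {κ ι : Type*}

def intCastPi (ι : Type*) : (ι → ℤ) →ₗ[ℤ] ι → ℚ :=
  (Int.castAddHom ℚ).toIntLinearMap.compLeft ι

@[simp]
lemma intCastPi_apply (x : ι → ℤ) (j : ι) : intCastPi ι x j = x j := rfl

lemma intCastPi_injective : Function.Injective (intCastPi ι) :=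
  fun _ _ h => funext fun j => by simpa using congrFun h j

lemma LinearIndependent.intCastPi {S : κ → ι → ℤ} (hS : LinearIndependent ℤ S) :
    LinearIndependent ℚ (intCastPi ι ∘ S) := by
  rw [← LinearIndependent.iff_fractionRing ℤ ℚ]
  exact hS.map' _ (LinearMap.ker_eq_bot_of_injective intCastPi_injective)

def saturation (S : κ → ι → ℤ) : Submodule ℤ (ι → ℤ) :=
  ((span ℚ (range (intCastPi ι ∘ S))).restrictScalars ℤ).comap (intCastPi ι)

variable {S : κ → ι → ℤ}

lemma mem_saturation {x : ι → ℤ} :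
    x ∈ saturation S ↔ intCastPi ι x ∈ span ℚ (range (intCastPi ι ∘ S)) := Iff.rfl

lemma span_le_saturation : span ℤ (range S) ≤ saturation S :=
  span_le.mpr <| by rintro _ ⟨i, rfl⟩; exact subset_span ⟨i, rfl⟩

lemma mem_saturation_of_smul_mem {p : ℤ} (hp : p ≠ 0) {x : ι → ℤ} (hx : p • x ∈ saturation S) :
    x ∈ saturation S := by
  rw [mem_saturation, map_zsmul, ← Int.cast_smul_eq_zsmul ℚ] at hx
  rw [mem_saturation]
  exact (smul_mem_iff _ (Int.cast_ne_zero.mpr hp)).mp hx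

lemma finrank_saturation [Fintype κ] [Finite ι] (hS : LinearIndependent ℤ S) :
    finrank ℤ (saturation S) = Fintype.card κ := by
  refine le_antisymm ?_ (finrank_span_eq_card hS ▸ Submodule.finrank_mono span_le_saturation)
  let b := Free.chooseBasis ℤ (saturation S)
  have hb : LinearIndependent ℚ (intCastPi ι ∘ fun i => (b i : ι → ℤ)) :=
    (b.linearIndependent.map' _ (ker_subtype _)).intCastPi
  rw [finrank_eq_card_chooseBasisIndex, ← finrank_span_eq_card hb,
    ← finrank_span_eq_card hS.intCastPi]
  exact Submodule.finrank_mono <| span_le.mpr <| by rintro _ ⟨i, rfl⟩; exact (b i).2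

end saturation

section zonotope

variable {k n : ℕ} {S : Fin k → Fin n → ℤ}

lemma mem_zonoPts_iff {x : Fin n → ℤ} :
    x ∈ zonoPts S ↔ ∃ c : Fin k → ℚ, (∀ i, c i ∈ Ico 0 1) ∧
      intCastPi _ x = ∑ i, c i • intCastPi _ (S i) := by
  simp [zonoPts, funext_iff, Finset.sum_apply]

lemma zonoPts_subset_saturation : zonoPts S ⊆ saturation S := by
  intro x hx
  obtain ⟨c, -, hc⟩ := mem_zonoPts_iff.mp hx
  exact (mem_span_range_iff_exists_fun ℚ).mpr ⟨c, hc.symm⟩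

lemma eq_of_sub_mem_span_of_mem_zonoPts (hS : LinearIndependent ℤ S) {x y : Fin n → ℤ}
    (hx : x ∈ zonoPts S) (hy : y ∈ zonoPts S) (hxy : x - y ∈ span ℤ (range S)) : x = y := by
  obtain ⟨c, hc, hcx⟩ := mem_zonoPts_iff.mp hx
  obtain ⟨d, hd, hdy⟩ := mem_zonoPts_iff.mp hy
  obtain ⟨m, hm⟩ := (mem_span_range_iff_exists_fun ℤ).mp hxy
  have hcoeff (i : Fin k) : (m i : ℚ) = c i - d i := by
    refine hS.intCastPi.eq_coords_of_eq (f := fun i => (m i : ℚ)) (g := fun i => c i - d i) ?_ i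
    simp only [Function.comp_apply, sub_smul, Finset.sum_sub_distrib, ← hcx, ← hdy, ← map_sub,
      ← hm, map_sum, map_zsmul, Int.cast_smul_eq_zsmul]
  have hm0 (i : Fin k) : m i = 0 := by
    have h₁ : (m i : ℚ) < 1 := by linarith [hcoeff i, (hc i).2, (hd i).1]
    have h₂ : (-1 : ℚ) < m i := by linarith [hcoeff i, (hc i).1, (hd i).2]
    have : m i < 1 := by exact_mod_cast h₁
    have : -1 < m i := by exact_mod_cast h₂
    omega
  exact sub_eq_zero.mp (by simpa [hm0] using hm.symm)

lemma exists_mem_zonoPts_sub_mem_span {x : Fin n → ℤ} (hx : x ∈ saturation S) :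
    ∃ z ∈ zonoPts S, z - x ∈ span ℤ (range S) := by
  obtain ⟨r, hr⟩ := (mem_span_range_iff_exists_fun ℚ).mp hx
  refine ⟨x - ∑ i, ⌊r i⌋ • S i, mem_zonoPts_iff.mpr ⟨fun i => Int.fract (r i),
    fun i => ⟨Int.fract_nonneg _, Int.fract_lt_one _⟩, ?_⟩, ?_⟩
  · simp only [map_sub, map_sum, map_zsmul, ← Int.cast_smul_eq_zsmul ℚ, ← hr, Int.fract,
      sub_smul, Finset.sum_sub_distrib, Function.comp_apply]
  · rw [sub_sub_cancel_left]
    exact neg_mem (sum_mem fun i _ => smul_mem _ _ (subset_span (mem_range_self i)))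

theorem ncard_zonoPts_eq_card_quotient (hS : LinearIndependent ℤ S) :
    (zonoPts S).ncard =
      Nat.card (saturation S ⧸ (span ℤ (range S)).comap (saturation S).subtype) := by
  rw [← Nat.card_coe_set_eq]
  refine Nat.card_congr (Equiv.ofBijective
    (fun x => Submodule.Quotient.mk ⟨x, zonoPts_subset_saturation x.2⟩) ⟨?_, ?_⟩)
  · rintro ⟨x, hx⟩ ⟨y, hy⟩ hxy
    rw [Submodule.Quotient.eq] at hxy
    exact Subtype.ext (eq_of_sub_mem_span_of_mem_zonoPts hS hx hy hxy)
  · intro q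
    obtain ⟨⟨x, hx⟩, rfl⟩ := Submodule.Quotient.mk_surjective _ q
    obtain ⟨z, hz, hzx⟩ := exists_mem_zonoPts_sub_mem_span hx
    exact ⟨⟨z, hz⟩, (Submodule.Quotient.eq _).mpr hzx⟩

end zonotope

theorem ncard_zonoPts_eq_gcdDet {k n : ℕ} {S : Fin k → Fin n → ℤ} (hS : LinearIndependent ℤ S) :
    (zonoPts S).ncard = gcdDet S := by
  let bM : Basis (Fin k) ℤ (saturation S) :=
    finBasisOfFinrankEq ℤ _ ((finrank_saturation hS).trans (Fintype.card_fin k))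
  let bL : Basis (Fin k) ℤ ((span ℤ (range S)).comap (saturation S).subtype) :=
    (Basis.span hS).map (comapSubtypeEquivOfLe span_le_saturation).symm
  let U := (bM.toMatrix fun i => (bL i : saturation S))ᵀ
  have hSU : S = U * Matrix.of fun i => (bM i : Fin n → ℤ) := by
    have hbL (i : Fin k) : ((bL i : saturation S) : Fin n → ℤ) = S i := by
      simp [bL, comapSubtypeEquivOfLe]
    ext i j
    rw [← hbL i, ← bM.sum_repr (bL i : saturation S)]
    simp only [U, coe_sum, coe_smul, Finset.sum_apply, Pi.smul_apply, smul_eq_mul,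
      Matrix.mul_apply, transpose_apply, Basis.toMatrix_apply, of_apply]
  calc (zonoPts S).ncard
      = Nat.card (saturation S ⧸ (span ℤ (range S)).comap (saturation S).subtype) :=
        ncard_zonoPts_eq_card_quotient hS
    _ = U.det.natAbs := by
        rw [← natAbs_det_basis_change bM _ bL, Basis.det_apply, det_transpose]; rfl
    _ = gcdDet S := by
        rw [hSU, gcdDet_mul, gcdDet_basis_eq_one (fun _ _ hp => mem_saturation_of_smul_mem hp) bM,
          mul_one]

theorem stmt15_general {a b n : ℕ} (A : Fin a → Fin n → ℤ) (B : Fin b → Fin n → ℤ)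
    (hli : LinearIndependent ℤ (Fin.append A B))
    (horth : gcdDet (Fin.append A B) = gcdDet A * gcdDet B) :
    (zonoPts (Fin.append A B)).ncard = (zonoPts A).ncard * (zonoPts B).ncard := by
  have hA : LinearIndependent ℤ A := by
    simpa [Function.comp_def] using hli.comp _ (Fin.castAdd_injective a b)
  have hB : LinearIndependent ℤ B := by
    simpa [Function.comp_def] using hli.comp _ (Fin.natAdd_injective b a)
  rw [ncard_zonoPts_eq_gcdDet hli, ncard_zonoPts_eq_gcdDet hA, ncard_zonoPts_eq_gcdDet hB, horth]

theorem stmt15 {a b n : ℕ} (A : Fin a → Fin n → ℤ) (B : Fin b → Fin n → ℤ)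
    (hdisj : ∀ i j, A i ≠ B j)
    (hli : LinearIndependent ℤ (Fin.append A B))
    (horth : gcdDet (Fin.append A B) = gcdDet A * gcdDet B) :
    (zonoPts (Fin.append A B)).ncard = (zonoPts A).ncard * (zonoPts B).ncard :=
  stmt15_general A B hli horth
end

section
/- If A = {a^1,…,a^n} is a thin te-interlace, then the Hilbert basis of cone(A) is A ∪ { (1/2)(a^i + a^j) : 1 ≤ i < j ≤ n }. -/
/-- A te-set, not a tu-set, in which each pair of vectors is a te-lace. -/
def TeInterlace {m n : ℕ} (A : Matrix (Fin m) (Fin n) ℚ) : Prop :=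
  TeSet A ∧ ¬ TuSet A ∧ ∀ i j : Fin m, i ≠ j → TeLace (Matrix.of ![A i, A j])

/-- A te-interlace of size `m` with equideterminant `2 ^ (m - 1)`. -/
def ThinTeInterlace {m n : ℕ} (A : Matrix (Fin m) (Fin n) ℚ) : Prop :=
  TeInterlace A ∧ ∃ g : Fin m ↪ Fin n, |(A.submatrix id g).det| = 2 ^ (m - 1)

/-- A te-interlace of size `m` with equideterminant `2 ^ m`. -/
def ThickTeInterlace {m n : ℕ} (A : Matrix (Fin m) (Fin n) ℚ) : Prop :=
  TeInterlace A ∧ ∃ g : Fin m ↪ Fin n, |(A.submatrix id g).det| = 2 ^ m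

/-- The simplicial cone generated by the integer vectors `A`. -/
def coneOf {k n : ℕ} (A : Fin k → Fin n → ℤ) : Set (Fin n → ℚ) :=
  {x | ∃ c : Fin k → ℚ, (∀ i, 0 ≤ c i) ∧ ∀ j, x j = ∑ i, c i * (A i j : ℚ)}

/-- `H` is a set of integer vectors of `C` whose nonnegative integer combinations
generate all the integer points of `C`. -/
def GeneratesIntPoints {n : ℕ} (C : Set (Fin n → ℚ)) (H : Set (Fin n → ℤ)) : Prop :=
  (∀ h ∈ H, (fun j => ((h j : ℚ))) ∈ C) ∧
  ∀ x : Fin n → ℤ, (fun j => ((x j : ℚ))) ∈ C →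
    ∃ (F : Finset (Fin n → ℤ)) (c : (Fin n → ℤ) → ℕ), ↑F ⊆ H ∧
      ∀ j, x j = ∑ h ∈ F, (c h : ℤ) * h j

/-- `H` is the Hilbert basis of `C`: a minimal set of integer vectors of `C`
generating all the integer points of `C` by nonnegative integer combinations. -/
def IsHilbertBasis {n : ℕ} (C : Set (Fin n → ℚ)) (H : Set (Fin n → ℤ)) : Prop :=
  GeneratesIntPoints C H ∧ ∀ H' ⊆ H, GeneratesIntPoints C H' → H' = H

/-!
Each pair of rows is a te-lace, so its nonzero `2 × 2` minors are `±2`; this forces all rows to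
have the same support, hence the rows agree modulo `2` and every half-sum `(aⁱ + aʲ)/2` is integral.
For a nonsingular maximal column submatrix `B` with rows `b₀, …`, write `B = E M` where `E` has rows
`e₀`, `e₀ + 2eᵢ` and `M` has rows `b₀`, `(bᵢ - b₀)/2`. Thinness, `|det B| = 2 ^ (m - 1) = det E`,
makes `M` unimodular, so `2 B⁻¹` is integral. Hence an integer point `x = ∑ cᵢ aⁱ` of the cone has
`2cᵢ ∈ ℕ`, i.e. `2x` is a sum of rows, and pairing off the summands (no row is divisible by `2`)
writes `x` as a sum of rows and half-sums. For minimality, the linear functional equal to `1` on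
every row is also `1` on every half-sum, so no basis element is a sum of two or more others.
-/

open Matrix

theorem AddSubmonoid.mem_closure_of_two_nsmul_eq_sum {G : Type*} [AddCommGroup G]
    [IsAddTorsionFree G] {S H : Set G} (hS : ∀ a ∈ S, ∀ x : G, 2 • x ≠ a)
    (hpair : ∀ a ∈ S, ∀ b ∈ S, ∃ h ∈ closure H, 2 • h = a + b) :
    ∀ (l : List G), (∀ a ∈ l, a ∈ S) → ∀ x : G, 2 • x = l.sum → x ∈ closure H
  | [], _, x, hx => by
    rw [nsmul_right_injective two_ne_zero (hx.trans (nsmul_zero 2).symm)]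
    exact zero_mem _
  | [a], hl, x, hx => (hS a (hl a (by simp)) x (by simpa using hx)).elim
  | a :: b :: l, hl, x, hx => by
    obtain ⟨h, hh, hab⟩ := hpair a (hl a (by simp)) b (hl b (by simp))
    have hrest : 2 • (x - h) = l.sum := by
      rw [nsmul_sub, hx, hab]; simp
    simpa using add_mem (mem_closure_of_two_nsmul_eq_sum hS hpair l
      (fun c hc => hl c (by simp [hc])) (x - h) hrest) hh

theorem AddSubmonoid.mem_closure_of_two_nsmul_mem_closure {G : Type*} [AddCommGroup G]
    [IsAddTorsionFree G] {S H : Set G} (hS : ∀ a ∈ S, ∀ x : G, 2 • x ≠ a)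
    (hpair : ∀ a ∈ S, ∀ b ∈ S, ∃ h ∈ closure H, 2 • h = a + b) {x : G}
    (hx : 2 • x ∈ closure S) : x ∈ closure H := by
  obtain ⟨l, hlS, hl⟩ := exists_list_of_mem_closure hx
  exact mem_closure_of_two_nsmul_eq_sum hS hpair l hlS x hl.symm

theorem AddSubmonoid.mem_of_mem_closure_of_map_eq_one {G R : Type*} [AddCommMonoid G]
    [AddCommMonoidWithOne R] [CharZero R] (f : G →+ R) {H : Set G} (hf : ∀ h ∈ H, f h = 1)
    {y : G} (hy : y ∈ closure H) (hfy : f y = 1) : y ∈ H := by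
  obtain ⟨l, hlH, rfl⟩ := exists_list_of_mem_closure hy
  have hlen : l.length = 1 := by
    rw [map_list_sum, List.map_congr_left (fun h hh => hf h (hlH h hh))] at hfy
    exact_mod_cast (by simpa using hfy : (l.length : R) = 1)
  obtain ⟨h, rfl⟩ := List.length_eq_one_iff.mp hlen
  simpa using hlH h (by simp)

theorem LinearIndependent.exists_linearMap_eq_one {ι K V : Type*} [Field K] [AddCommGroup V]
    [Module K V] {v : ι → V} (hv : LinearIndependent K v) :
    ∃ φ : V →ₗ[K] K, ∀ i, φ (v i) = 1 := by
  obtain ⟨φ, hφ⟩ := LinearMap.exists_extend (Module.Basis.span hv).sumCoords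
  refine ⟨φ, fun i => ?_⟩
  have := congr($hφ ⟨v i, Submodule.subset_span (Set.mem_range_self i)⟩)
  simpa [Module.Basis.span_apply] using this

theorem Matrix.exists_mul_eq_two_smul_one_of_abs_det {m : ℕ} (B : Matrix (Fin m) (Fin m) ℤ)
    (hpar : ∀ i j k, Even (B i k - B j k)) (hdet : |B.det| = 2 ^ (m - 1)) :
    ∃ N : Matrix (Fin m) (Fin m) ℤ, B * N = 2 • 1 := by
  rcases m with _ | p
  · exact ⟨0, Subsingleton.elim _ _⟩
  let E : Matrix (Fin (p+1)) (Fin (p+1)) ℤ :=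
    of fun i k => if k = 0 then 1 else if i = k then 2 else 0
  let F : Matrix (Fin (p+1)) (Fin (p+1)) ℤ := of fun k j =>
    if k = 0 then (if j = 0 then 2 else 0) else (if k = j then 1 else if j = 0 then -1 else 0)
  let M : Matrix (Fin (p+1)) (Fin (p+1)) ℤ :=
    of fun i k => if i = 0 then B 0 k else (B i k - B 0 k) / 2
  -- `F = 2 • E⁻¹`, and `B = E * M` with `M` unimodular because `det E = 2 ^ p = |det B|`.
  have hEF : E * F = 2 • 1 := by
    ext i j
    induction i using Fin.cases <;> induction j using Fin.cases <;>
      simp [E, F, mul_apply, Fin.sum_univ_succ, one_apply, Fin.succ_ne_zero, Fin.succ_inj,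
        (Fin.succ_ne_zero _).symm]
  have hEM : E * M = B := by
    ext i k
    induction i using Fin.cases with
    | zero => simp [E, M, mul_apply, Fin.sum_univ_succ, Fin.succ_ne_zero, (Fin.succ_ne_zero _).symm]
    | succ i =>
      have h2 : 2 * ((B i.succ k - B 0 k) / 2) = B i.succ k - B 0 k :=
        Int.mul_ediv_cancel' (even_iff_two_dvd.mp (hpar _ 0 k))
      simp [E, M, mul_apply, Fin.sum_univ_succ, Fin.succ_ne_zero, Fin.succ_inj, h2]
  have hE : E.det = 2 ^ p := by
    rw [det_of_isLowerTriangular]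
    · simp [E, Fin.prod_univ_succ, Fin.succ_ne_zero]
    · intro i k (hik : i < k)
      simp [E, hik.ne, ((Fin.zero_le i).trans_lt hik).ne']
  have hM : IsUnit M.det := by
    rw [Int.isUnit_iff_abs_eq]
    rw [← hEM, det_mul, hE, abs_mul, abs_pow, abs_two, Nat.add_sub_cancel] at hdet
    exact (mul_eq_left₀ (by positivity)).mp hdet
  refine ⟨M⁻¹ * F, ?_⟩
  rw [← hEM, Matrix.mul_assoc, ← Matrix.mul_assoc M, mul_nonsing_inv M hM, Matrix.one_mul, hEF]

theorem mem_range_signTypeCast_iff {x : ℚ} :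
    x ∈ Set.range (SignType.cast : SignType → ℚ) ↔ x = 0 ∨ x = 1 ∨ x = -1 := by
  constructor
  · rintro ⟨s, rfl⟩; cases s <;> simp
  · rintro (rfl | rfl | rfl)
    exacts [⟨0, rfl⟩, ⟨1, rfl⟩, ⟨-1, by simp⟩]

theorem abs_det_fin_two_eq_two {M : Matrix (Fin 2) (Fin 2) ℚ} (hM : ZeroPmOne M)
    (hdet : M.det ∉ Set.range SignType.cast) : |M.det| = 2 := by
  rw [mem_range_signTypeCast_iff, det_fin_two] at hdet
  rw [det_fin_two]
  rcases hM 0 0 with h₁ | h₁ | h₁ <;> rcases hM 0 1 with h₂ | h₂ | h₂ <;>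
    rcases hM 1 0 with h₃ | h₃ | h₃ <;> rcases hM 1 1 with h₄ | h₄ | h₄ <;>
    simp only [h₁, h₂, h₃, h₄] at hdet ⊢ <;> revert hdet <;> norm_num

theorem generatesIntPoints_iff {n : ℕ} {C : Set (Fin n → ℚ)} {H : Set (Fin n → ℤ)} :
    GeneratesIntPoints C H ↔ (∀ h ∈ H, (fun j => (h j : ℚ)) ∈ C) ∧
      ∀ x : Fin n → ℤ, (fun j => (x j : ℚ)) ∈ C → x ∈ AddSubmonoid.closure H := by
  refine and_congr_right fun _ => forall_congr' fun x => imp_congr_right fun _ => ?_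
  constructor
  · rintro ⟨F, c, hFH, hx⟩
    rw [show x = ∑ h ∈ F, c h • h from funext fun j => by simp [hx j, Finset.sum_apply]]
    exact sum_mem fun h hh => nsmul_mem (AddSubmonoid.subset_closure (hFH hh)) _
  · intro hx
    obtain ⟨c, F, hFH, -, rfl⟩ := AddSubmonoid.mem_closure_iff_exists_finset_subset.mp hx
    exact ⟨F, c, hFH, fun j => by simp [Finset.sum_apply]⟩

theorem isHilbertBasis_of_map_eq_one {n : ℕ} {C : Set (Fin n → ℚ)} {H : Set (Fin n → ℤ)}
    (hH : GeneratesIntPoints C H) (f : (Fin n → ℤ) →+ ℚ) (hf : ∀ h ∈ H, f h = 1) :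
    IsHilbertBasis C H := by
  refine ⟨hH, fun H' hH' hgen => hH'.antisymm fun y hy => ?_⟩
  exact AddSubmonoid.mem_of_mem_closure_of_map_eq_one f (fun h hh => hf h (hH' hh))
    ((generatesIntPoints_iff.1 hgen).2 y (hH.1 y hy)) (hf y hy)

theorem mem_coneOf_of_two_mul_eq_add {m n : ℕ} (A : Fin m → Fin n → ℤ) {x : Fin n → ℤ}
    {i j : Fin m} (hx : ∀ c, 2 * x c = A i c + A j c) : (fun c => (x c : ℚ)) ∈ coneOf A := by
  refine ⟨fun k => (if k = i then 1 / 2 else 0) + (if k = j then 1 / 2 else 0),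
    fun k => by positivity, fun c => ?_⟩
  have hxc : 2 * (x c : ℚ) = A i c + A j c := by exact_mod_cast hx c
  simp only [add_mul, ite_mul, zero_mul, Finset.sum_add_distrib, Finset.sum_ite_eq',
    Finset.mem_univ, if_true]
  linarith

theorem two_nsmul_mem_closure_of_mem_coneOf {m n : ℕ} (A : Fin m → Fin n → ℤ)
    (g : Fin m → Fin n) {N : Matrix (Fin m) (Fin m) ℤ}
    (hN : (of fun i k => A i (g k)) * N = 2 • 1) {x : Fin n → ℤ}
    (hx : (fun j => (x j : ℚ)) ∈ coneOf A) :
    2 • x ∈ AddSubmonoid.closure (Set.range A) := by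
  obtain ⟨c, hc₀, hcx⟩ := hx
  set B : Matrix (Fin m) (Fin m) ℤ := of fun i k => A i (g k)
  let z := (fun k => x (g k)) ᵥ* N
  have hxg : (Int.cast ∘ fun k => x (g k)) = c ᵥ* B.map (Int.castRingHom ℚ) := by
    ext k; simp [B, hcx (g k), vecMul, dotProduct]
  have hz : ∀ i, (z i : ℚ) = 2 * c i := fun i => calc
    (z i : ℚ) = ((Int.cast ∘ fun k => x (g k)) ᵥ* N.map (Int.castRingHom ℚ)) i :=
      (Int.castRingHom ℚ).map_vecMul N _ i
    _ = (c ᵥ* (B * N).map (Int.castRingHom ℚ)) i := by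
      rw [Matrix.map_mul, ← vecMul_vecMul, ← hxg]
    _ = 2 * c i := by simp [hN, Matrix.map_ofNat, mul_comm]
  have hz₀ : ∀ i, 0 ≤ z i := fun i => by
    have : (0 : ℚ) ≤ z i := by rw [hz i]; linarith [hc₀ i]
    exact_mod_cast this
  have h2x : 2 • x = ∑ i, (z i).toNat • A i := by
    ext j
    have : (2 * x j : ℚ) = ∑ i, (z i : ℚ) * A i j := by
      simp only [hz, hcx j, Finset.mul_sum, mul_assoc]
    simpa [Finset.sum_apply, Int.toNat_of_nonneg (hz₀ _)] using (by exact_mod_cast this :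
      2 * x j = ∑ i, z i * A i j)
  rw [h2x]
  exact sum_mem fun i _ => nsmul_mem (AddSubmonoid.subset_closure (Set.mem_range_self i)) _

theorem TeLace.abs_det_eq_two {n : ℕ} {P : Matrix (Fin 2) (Fin n) ℚ} (hP : TeLace P)
    (g : Fin 2 ↪ Fin n) (hg : (P.submatrix id g).det ≠ 0) : |(P.submatrix id g).det| = 2 := by
  obtain ⟨⟨h01, hli, hte⟩, hnotTU, -⟩ := hP
  obtain ⟨d, hd⟩ : Equimodular P := hte 2 (.refl _) hli
  have hnotTU' : ¬ P.IsTotallyUnimodular := fun h => hnotTU ⟨h01, hli, h⟩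
  simp only [IsTotallyUnimodular, not_forall] at hnotTU'
  obtain ⟨k, f, g', hf, hg', hdet⟩ := hnotTU'
  have hk : k ≤ 2 := by simpa using Fintype.card_le_of_injective f hf
  interval_cases k
  · exact absurd ⟨1, by simp⟩ hdet
  · exact absurd (by rw [det_unique]; exact mem_range_signTypeCast_iff.2 (h01 _ _)) hdet
  · let e := Equiv.ofBijective f (Finite.injective_iff_bijective.mp hf)
    have h2 : |(P.submatrix id g').det| = 2 := by
      rw [← abs_det_submatrix_equiv_equiv e (Equiv.refl _)]
      exact abs_det_fin_two_eq_two (fun _ _ => h01 _ _) hdet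
    have hne : (P.submatrix id g').det ≠ 0 := by
      intro h; simp [h] at h2
    rw [hd g hg, ← h2, ← hd ⟨g', hg'⟩ hne]
    rfl

theorem TeLace.ne_zero_of_ne_zero {n : ℕ} {P : Matrix (Fin 2) (Fin n) ℚ} (hP : TeLace P)
    {c : Fin n} (hc : P 0 c ≠ 0) : P 1 c ≠ 0 := by
  intro hc₁
  obtain ⟨c', hc'⟩ : ∃ c', P 1 c' ≠ 0 := by
    by_contra! h
    exact hP.1.2.1.ne_zero 1 (funext h)
  have hcc' : c ≠ c' := by rintro rfl; exact hc' hc₁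
  let g : Fin 2 ↪ Fin n := ⟨![c, c'], by
    intro x y; fin_cases x <;> fin_cases y <;> simp [hcc', hcc'.symm]⟩
  have hdet : (P.submatrix id g).det = P 0 c * P 1 c' := by
    rw [det_fin_two]
    change P 0 c * P 1 c' - P 0 c' * P 1 c = _
    rw [hc₁, mul_zero, sub_zero]
  have habs : ∀ {i j}, P i j ≠ 0 → |P i j| = 1 := fun {i j} h => by
    rcases hP.1.1 i j with h' | h' | h' <;> simp_all
  have h2 := hP.abs_det_eq_two g (by rw [hdet]; exact mul_ne_zero hc hc')
  rw [hdet, abs_mul, habs hc, habs hc'] at h2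
  norm_num at h2

def halfSums {m n : ℕ} (A : Fin m → Fin n → ℤ) : Set (Fin n → ℤ) :=
  {x | ∃ i j : Fin m, i < j ∧ ∀ c, 2 * x c = A i c + A j c}

namespace TeInterlace

variable {m n : ℕ} {A : Fin m → Fin n → ℤ}

theorem entry_eq_zero_or_one_or_neg_one (hA : TeInterlace (of fun i j => (A i j : ℚ)))
    (i : Fin m) (c : Fin n) :
    A i c = 0 ∨ A i c = 1 ∨ A i c = -1 := by
  have h := hA.1.1 i c
  simp only [of_apply] at h
  exact_mod_cast h

theorem ne_zero_of_ne_zero (hA : TeInterlace (of fun i j => (A i j : ℚ))) {i j : Fin m}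
    (hij : i ≠ j) {c : Fin n} (hc : A i c ≠ 0) : A j c ≠ 0 := by
  simpa using (hA.2.2 i j hij).ne_zero_of_ne_zero (c := c) (by simpa using hc)

theorem even_iff_even (hA : TeInterlace (of fun i j => (A i j : ℚ))) (i j : Fin m) (c : Fin n) :
    Even (A i c) ↔ Even (A j c) := by
  rcases eq_or_ne i j with rfl | hij
  · rfl
  have hij' := mt (hA.ne_zero_of_ne_zero hij (c := c))
  have hji' := mt (hA.ne_zero_of_ne_zero hij.symm (c := c))
  rcases hA.entry_eq_zero_or_one_or_neg_one i c with hi | hi | hi <;>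
    rcases hA.entry_eq_zero_or_one_or_neg_one j c with hj | hj | hj <;> simp_all

theorem exists_odd (hA : TeInterlace (of fun i j => (A i j : ℚ))) (i : Fin m) :
    ∃ c, Odd (A i c) := by
  obtain ⟨c, hc⟩ : ∃ c, A i c ≠ 0 := by
    by_contra! h
    exact hA.1.2.1.ne_zero i (funext fun c => by simp [h c])
  refine ⟨c, ?_⟩
  rcases hA.entry_eq_zero_or_one_or_neg_one i c with h | h | h <;> simp_all

theorem exists_two_nsmul_eq_add (hA : TeInterlace (of fun i j => (A i j : ℚ))) (i j : Fin m) :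
    ∃ h ∈ Set.range A ∪ halfSums A, 2 • h = A i + A j := by
  wlog hij : i ≤ j generalizing i j
  · obtain ⟨h, hh, h2⟩ := this j i (le_of_not_ge hij)
    exact ⟨h, hh, h2.trans (add_comm _ _)⟩
  rcases hij.eq_or_lt with rfl | hij
  · exact ⟨A i, Or.inl ⟨i, rfl⟩, two_nsmul _⟩
  have hdvd : ∀ c, 2 ∣ A i c + A j c := fun c =>
    even_iff_two_dvd.mp (Int.even_add.mpr (hA.even_iff_even i j c))
  refine ⟨fun c => (A i c + A j c) / 2, Or.inr ⟨i, j, hij, fun c => Int.mul_ediv_cancel' (hdvd c)⟩,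
    funext fun c => ?_⟩
  simpa using Int.mul_ediv_cancel' (hdvd c)

end TeInterlace

theorem exists_addMonoidHom_eq_one_of_linearIndependent {m n : ℕ} {A : Fin m → Fin n → ℤ}
    (hA : LinearIndependent ℚ fun i j => (A i j : ℚ)) :
    ∃ f : (Fin n → ℤ) →+ ℚ, ∀ h ∈ Set.range A ∪ halfSums A, f h = 1 := by
  obtain ⟨φ, hφ⟩ := hA.exists_linearMap_eq_one
  refine ⟨φ.toAddMonoidHom.comp ((Int.castAddHom ℚ).compLeft (Fin n)), ?_⟩
  rintro h (⟨i, rfl⟩ | ⟨i, j, -, h2⟩)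
  · exact hφ i
  · have : 2 • (fun c => (h c : ℚ)) = (fun c => (A i c : ℚ)) + fun c => (A j c : ℚ) := by
      ext c; simpa using congr_arg (Int.cast : ℤ → ℚ) (h2 c)
    have h2φ := congr_arg φ this
    rw [map_nsmul, map_add, hφ, hφ, two_nsmul] at h2φ
    change φ (fun c => (h c : ℚ)) = 1
    linarith

theorem ThinTeInterlace.generatesIntPoints {m n : ℕ} {A : Fin m → Fin n → ℤ}
    (hA : ThinTeInterlace (of fun i j => (A i j : ℚ))) :
    GeneratesIntPoints (coneOf A) (Set.range A ∪ halfSums A) := by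
  obtain ⟨hTI, g, hdet⟩ := hA
  refine generatesIntPoints_iff.2 ⟨?_, fun x hx => ?_⟩
  · rintro h (⟨i, rfl⟩ | ⟨i, j, -, h2⟩)
    exacts [mem_coneOf_of_two_mul_eq_add A (i := i) (j := i) fun c => two_mul _,
      mem_coneOf_of_two_mul_eq_add A h2]
  have hdetB : |(of fun i k => A i (g k)).det| = 2 ^ (m - 1) := by
    have hcast : ((of fun i k => A i (g k)).det : ℚ) =
        ((of fun i j => (A i j : ℚ)).submatrix id g).det := by
      rw [← eq_intCast (Int.castRingHom ℚ), RingHom.map_det]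
      rfl
    rw [← hcast] at hdet
    exact_mod_cast hdet
  obtain ⟨N, hN⟩ := exists_mul_eq_two_smul_one_of_abs_det _
    (fun i j k => Int.even_sub.mpr (hTI.even_iff_even i j (g k))) hdetB
  refine AddSubmonoid.mem_closure_of_two_nsmul_mem_closure ?_ ?_
    (two_nsmul_mem_closure_of_mem_coneOf A g hN hx)
  · rintro _ ⟨i, rfl⟩ y hy
    obtain ⟨c, hc⟩ := hTI.exists_odd i
    exact Int.not_even_iff_odd.mpr hc ⟨y c, by simp [← hy, two_mul]⟩
  · rintro _ ⟨i, rfl⟩ _ ⟨j, rfl⟩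
    obtain ⟨h, hh, h2⟩ := hTI.exists_two_nsmul_eq_add i j
    exact ⟨h, AddSubmonoid.subset_closure hh, h2⟩

theorem stmt18 {m n : ℕ} (A : Fin m → Fin n → ℤ)
    (hA : ThinTeInterlace (Matrix.of fun i j => ((A i j : ℚ)))) :
    IsHilbertBasis (coneOf A)
      (Set.range A ∪
        {x | ∃ i j : Fin m, i < j ∧ ∀ c, 2 * x c = A i c + A j c}) := by
  obtain ⟨f, hf⟩ := exists_addMonoidHom_eq_one_of_linearIndependent hA.1.1.2.1
  exact isHilbertBasis_of_map_eq_one hA.generatesIntPoints f hf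
end
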